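/- arXiv:1106.5467 — 7 statements merged into one kernel-verified Lean document; each statement's English description precedes it below -/
import Mathlib

section
/- For n ≥ 2, if X is a nonzero real symmetric n×n matrix of trace zero, then the linear span of the set {U X Uᵀ : U ∈ SO(n)} equals the space of all real symmetric n×n matrices of trace zero. -/
/-!
The span `W` of the orbit is invariant under conjugation by `SO(n)`, and diagonalising `X` puts a
diagonal matrix `diagonal d` into `W`, with `d ≠ 0` and `∑ d = 0`, so `d` is not constant.
On diagonal matrices, conjugation by an orthogonal `A` agrees with conjugation by
`A * diagonal (det A, 1, …, 1) ∈ SO(n)`, so `W` is also stable under orthogonal conjugation of its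
diagonal members. A quarter-turn plane rotation swaps two diagonal entries, hence the vectors `v`
with `diagonal v ∈ W` form a permutation-invariant subspace containing the non-constant `d`, which
forces it to contain every vector of sum zero. Rotating `diagonal (eₖ - eₗ)` by an eighth of a turn
gives `Eₖₗ + Eₗₖ`, and these matrices together with the trace-zero diagonal ones span the symmetric
trace-zero matrices.
-/

open Matrix

def symTraceZero (n : ℕ) : Submodule ℝ (Matrix (Fin n) (Fin n) ℝ) where
  carrier := {X | Xᵀ = X ∧ X.trace = 0}
  add_mem' := by
    rintro a b ⟨ha1, ha2⟩ ⟨hb1, hb2⟩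
    exact ⟨by simp [Matrix.transpose_add, ha1, hb1], by simp [Matrix.trace_add, ha2, hb2]⟩
  zero_mem' := ⟨by simp, by simp⟩
  smul_mem' := by
    rintro c a ⟨h1, h2⟩
    exact ⟨by simp [Matrix.transpose_smul, h1], by simp [Matrix.trace_smul, h2]⟩

theorem comp_swap_eq_add_smul {ι R : Type*} [DecidableEq ι] [CommRing R] (v : ι → R) (i j : ι) :
    v ∘ Equiv.swap i j = v + (v j - v i) • (Pi.single i 1 - Pi.single j 1) := by
  ext m
  simp only [Function.comp_apply, Equiv.swap_apply_def, Pi.add_apply, Pi.smul_apply, Pi.sub_apply,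
    Pi.single_apply, smul_eq_mul]
  split_ifs <;> simp_all

theorem exists_apply_ne_of_sum_eq_zero {ι K : Type*} [Fintype ι] [Field K] [CharZero K]
    {d : ι → K} (hd : d ≠ 0) (hsum : ∑ k, d k = 0) : ∃ i j, d i ≠ d j := by
  obtain ⟨i, hi⟩ := Function.ne_iff.mp hd
  by_contra! hconst
  have hcard : (Fintype.card ι : K) * d i = 0 := by
    rw [← hsum, Finset.sum_congr rfl fun k _ => hconst k i]
    simp
  have : Nonempty ι := ⟨i⟩
  exact hi ((mul_eq_zero.mp hcard).resolve_left (Nat.cast_ne_zero.mpr Fintype.card_ne_zero))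

theorem Submodule.mem_of_sum_eq_zero_of_comp_swap_mem {ι K : Type*} [Fintype ι] [DecidableEq ι]
    [Field K] {P : Submodule K (ι → K)} (hP : ∀ v ∈ P, ∀ i j, v ∘ Equiv.swap i j ∈ P)
    {v : ι → K} (hv : v ∈ P) {i j : ι} (hvij : v i ≠ v j) {c : ι → K} (hc : ∑ k, c k = 0) :
    c ∈ P := by
  have hdiff : ∀ w ∈ P, ∀ k l, w k ≠ w l → Pi.single k 1 - Pi.single l 1 ∈ P := by
    intro w hw k l hwkl
    have h := P.sub_mem (hP w hw k l) hw
    rwa [comp_swap_eq_add_smul, add_sub_cancel_left,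
      P.smul_mem_iff (sub_ne_zero.mpr hwkl.symm)] at h
  have hij : Pi.single i 1 - Pi.single j 1 ∈ P := hdiff v hv i j hvij
  have hik : ∀ k, Pi.single i 1 - Pi.single k 1 ∈ P := by
    intro k
    obtain rfl | hki := eq_or_ne k i
    · simp
    obtain rfl | hkj := eq_or_ne k j
    · exact hij
    refine hdiff _ hij i k ?_
    simp [hki, hkj, ne_of_apply_ne v hvij]
  have hc' : c = -∑ k, c k • (Pi.single i 1 - Pi.single k 1) := by
    ext m
    simp [Finset.sum_sub_distrib, smul_sub, ← Finset.sum_smul, hc, Pi.single_apply]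
  rw [hc']
  exact P.neg_mem (P.sum_mem fun k _ => P.smul_mem _ (hik k))

namespace Matrix

variable {ι R : Type*} [Fintype ι] [DecidableEq ι] [CommRing R]

theorem conj_mem_span_conj_orbit {G : Submonoid (Matrix ι ι R)} {X V M : Matrix ι ι R}
    (hV : V ∈ G) (hM : M ∈ Submodule.span R {M | ∃ U ∈ G, M = U * X * Uᵀ}) :
    V * M * Vᵀ ∈ Submodule.span R {M | ∃ U ∈ G, M = U * X * Uᵀ} := by
  induction hM using Submodule.span_induction with
  | mem _ hM =>
    obtain ⟨U, hU, rfl⟩ := hM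
    refine Submodule.subset_span ⟨V * U, G.mul_mem hV hU, ?_⟩
    simp only [transpose_mul, Matrix.mul_assoc]
  | zero => simp
  | add _ _ _ _ hM hN => simpa [Matrix.mul_add, Matrix.add_mul] using Submodule.add_mem _ hM hN
  | smul a _ _ hM => simpa using Submodule.smul_mem _ a hM

section PlaneRotation

def planeRotation (i j : ι) (c s : R) : Matrix ι ι R :=
  of fun k l =>
    if k = i then (if l = i then c else if l = j then -s else 0)
    else if k = j then (if l = i then s else if l = j then c else 0)
    else if k = l then 1 else 0

variable {i j : ι} (c s : R)

theorem planeRotation_mul_apply (hij : i ≠ j) (M : Matrix ι ι R) (k l : ι) :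
    (planeRotation i j c s * M) k l =
      if k = i then c * M i l - s * M j l
      else if k = j then s * M i l + c * M j l
      else M k l := by
  rw [mul_apply]
  split_ifs with hki hkj
  · rw [Fintype.sum_eq_add i j hij fun m hm => by simp [planeRotation, hki, hm.1, hm.2]]
    simp [planeRotation, hki, hij.symm]
    ring
  · rw [Fintype.sum_eq_add i j hij fun m hm => by simp [planeRotation, hkj, hm.1, hm.2, hij.symm]]
    simp [planeRotation, hkj, hij.symm]
  · rw [Fintype.sum_eq_single k fun m hm => by simp [planeRotation, hki, hkj, hm.symm]]
    simp [planeRotation, hki, hkj]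

theorem planeRotation_conj_diagonal (hij : i ≠ j) (hcs : c ^ 2 + s ^ 2 = 1) (d : ι → R) :
    planeRotation i j c s * diagonal d * (planeRotation i j c s)ᵀ =
      diagonal (d + (s ^ 2 * (d j - d i)) • (Pi.single i 1 - Pi.single j 1)) +
        (c * s * (d i - d j)) • (single i j 1 + single j i 1) := by
  have : diagonal d * (planeRotation i j c s)ᵀ = (planeRotation i j c s * diagonal d)ᵀ := by
    rw [transpose_mul, diagonal_transpose]
  rw [Matrix.mul_assoc, this]
  ext k l
  simp only [planeRotation_mul_apply c s hij, transpose_apply, diagonal_apply, add_apply,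
    smul_apply, single_apply, Pi.add_apply, Pi.smul_apply, Pi.sub_apply, Pi.single_apply]
  obtain hk | hk | ⟨hki, hkj⟩ : k = i ∨ k = j ∨ k ≠ i ∧ k ≠ j := by tauto
  all_goals obtain hl | hl | ⟨hli, hlj⟩ : l = i ∨ l = j ∨ l ≠ i ∧ l ≠ j := by tauto
  all_goals simp [hij.symm, eq_comm (a := i), eq_comm (a := j), *]
  all_goals first
    | ring1
    | linear_combination d i * hcs
    | linear_combination d j * hcs
    | by_cases hkl : k = l <;> simp [hkl, eq_comm]

theorem planeRotation_mem_orthogonalGroup (hij : i ≠ j) (hcs : c ^ 2 + s ^ 2 = 1) :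
    planeRotation i j c s ∈ orthogonalGroup ι R := by
  have h := planeRotation_conj_diagonal c s hij hcs fun _ => 1
  simp only [sub_self, mul_zero, zero_smul, add_zero, diagonal_one, Matrix.mul_one] at h
  exact (mem_orthogonalGroup_iff ι R).mpr h

end PlaneRotation

theorem IsSymm.sum_smul_single_add_single {A : Matrix ι ι R} (hA : A.IsSymm) :
    ∑ k, ∑ l, A k l • (single k l 1 + single l k 1) = A + A := by
  simp only [smul_add, Finset.sum_add_distrib, smul_single, smul_eq_mul, mul_one]
  rw [Finset.sum_comm (f := fun k l => single l k (A k l))]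
  simp only [hA.apply]
  rw [← matrix_eq_sum_single]

theorem transpose_mem_specialOrthogonalGroup {V : Matrix ι ι R}
    (hV : V ∈ specialOrthogonalGroup ι R) : Vᵀ ∈ specialOrthogonalGroup ι R := by
  rw [mem_specialOrthogonalGroup_iff, mem_orthogonalGroup_iff, transpose_transpose,
    ← mem_orthogonalGroup_iff', det_transpose]
  exact hV

theorem exists_mem_specialOrthogonalGroup_conj_diagonal_eq [Nonempty ι] {A : Matrix ι ι R}
    (hA : A ∈ orthogonalGroup ι R) :
    ∃ V ∈ specialOrthogonalGroup ι R, ∀ d : ι → R, V * diagonal d * Vᵀ = A * diagonal d * Aᵀ := by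
  obtain ⟨i₀⟩ := ‹Nonempty ι›
  have hdet : A.det * A.det = 1 := by
    simpa using congrArg det ((mem_orthogonalGroup_iff ι R).mp hA)
  set f : ι → R := Function.update 1 i₀ A.det
  have hf : ∀ k, f k * f k = 1 := by
    intro k
    by_cases hk : k = i₀ <;> simp [f, hk, hdet]
  refine ⟨A * diagonal f, (mem_specialOrthogonalGroup_iff).mpr ⟨?_, ?_⟩, fun d => ?_⟩
  · refine Submonoid.mul_mem _ hA ((mem_orthogonalGroup_iff ι R).mpr ?_)
    simp [diagonal_mul_diagonal, hf]
  · simp [det_diagonal, f, Function.update_apply, hdet]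
  · have hfdf : diagonal f * diagonal d * diagonal f = diagonal d := by
      rw [diagonal_mul_diagonal, diagonal_mul_diagonal]
      congr 1
      ext k
      linear_combination d k * hf k
    calc A * diagonal f * diagonal d * (A * diagonal f)ᵀ
        = A * (diagonal f * diagonal d * diagonal f) * Aᵀ := by
          simp only [transpose_mul, diagonal_transpose, Matrix.mul_assoc]
      _ = A * diagonal d * Aᵀ := by rw [hfdf]

theorem exists_mem_specialOrthogonalGroup_conj_eq_diagonal [Nonempty ι] {X : Matrix ι ι ℝ}
    (hX : X.IsHermitian) :
    ∃ V ∈ specialOrthogonalGroup ι ℝ, V * X * Vᵀ = diagonal hX.eigenvalues := by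
  set U : Matrix ι ι ℝ := ↑hX.eigenvectorUnitary
  have hXU : X = U * diagonal hX.eigenvalues * Uᵀ := by
    simpa [U, star_eq_conjTranspose, conjTranspose_eq_transpose_of_trivial] using
      hX.spectral_theorem
  obtain ⟨V, hV, hVU⟩ :=
    exists_mem_specialOrthogonalGroup_conj_diagonal_eq (A := U) hX.eigenvectorUnitary.2
  have hVV : Vᵀ * V = 1 := (mem_orthogonalGroup_iff' ι ℝ).mp hV.1
  refine ⟨Vᵀ, transpose_mem_specialOrthogonalGroup hV, ?_⟩
  conv_lhs => rw [hXU, ← hVU, transpose_transpose]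
  simp only [← Matrix.mul_assoc, hVV, Matrix.one_mul]
  rw [Matrix.mul_assoc, hVV, Matrix.mul_one]

section OrbitSpan

variable {K : Type*} [Field K]

abbrev soConjOrbitSpan (X : Matrix ι ι K) : Submodule K (Matrix ι ι K) :=
  Submodule.span K {M | ∃ U ∈ specialOrthogonalGroup ι K, M = U * X * Uᵀ}

variable {X : Matrix ι ι K}

theorem conj_diagonal_mem_soConjOrbitSpan [Nonempty ι] {A : Matrix ι ι K} {d : ι → K}
    (hA : A ∈ orthogonalGroup ι K) (hd : diagonal d ∈ soConjOrbitSpan X) :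
    A * diagonal d * Aᵀ ∈ soConjOrbitSpan X := by
  obtain ⟨V, hV, hVA⟩ := exists_mem_specialOrthogonalGroup_conj_diagonal_eq hA
  rw [← hVA]
  exact conj_mem_span_conj_orbit hV hd

theorem diagonal_comp_swap_mem_soConjOrbitSpan {d : ι → K} (hd : diagonal d ∈ soConjOrbitSpan X)
    (i j : ι) : diagonal (d ∘ Equiv.swap i j) ∈ soConjOrbitSpan X := by
  obtain rfl | hij := eq_or_ne i j
  · simpa using hd
  have : Nonempty ι := ⟨i⟩
  have hcs : (0 : K) ^ 2 + 1 ^ 2 = 1 := by norm_num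
  have h := conj_diagonal_mem_soConjOrbitSpan (planeRotation_mem_orthogonalGroup 0 1 hij hcs) hd
  rwa [planeRotation_conj_diagonal 0 1 hij hcs, zero_mul, zero_mul, zero_smul, add_zero, one_pow,
    one_mul, ← comp_swap_eq_add_smul] at h

theorem diagonal_mem_soConjOrbitSpan_of_sum_eq_zero {d : ι → K}
    (hd : diagonal d ∈ soConjOrbitSpan X) {i j : ι} (hdij : d i ≠ d j) {c : ι → K}
    (hc : ∑ k, c k = 0) : diagonal c ∈ soConjOrbitSpan X :=
  Submodule.mem_of_sum_eq_zero_of_comp_swap_mem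
    (P := (soConjOrbitSpan X).comap (diagonalLinearMap ι K K))
    (fun _ hv i j => diagonal_comp_swap_mem_soConjOrbitSpan hv i j) hd hdij hc

end OrbitSpan

theorem single_add_single_mem_soConjOrbitSpan {X : Matrix ι ι ℝ} {k l : ι} (hkl : k ≠ l)
    (h : diagonal (Pi.single k 1 - Pi.single l 1) ∈ soConjOrbitSpan X) :
    single k l 1 + single l k 1 ∈ soConjOrbitSpan X := by
  have : Nonempty ι := ⟨k⟩
  have ha : (√2 / 2) ^ 2 = (1 / 2 : ℝ) := by rw [div_pow, Real.sq_sqrt zero_le_two]; norm_num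
  have hcs : (√2 / 2) ^ 2 + (√2 / 2) ^ 2 = (1 : ℝ) := by rw [ha]; norm_num
  have h' := conj_diagonal_mem_soConjOrbitSpan (planeRotation_mem_orthogonalGroup _ _ hkl hcs) h
  rw [planeRotation_conj_diagonal _ _ hkl hcs] at h'
  norm_num [hkl, hkl.symm, ha, ← sq] at h'
  exact h'

end Matrix

theorem conj_mem_symTraceZero {n : ℕ} {U X : Matrix (Fin n) (Fin n) ℝ}
    (hU : U ∈ orthogonalGroup (Fin n) ℝ) (hX : X ∈ symTraceZero n) :
    U * X * Uᵀ ∈ symTraceZero n := by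
  obtain ⟨hXsym, hXtr⟩ := hX
  refine ⟨by simp [Matrix.mul_assoc, hXsym], ?_⟩
  rw [trace_mul_cycle, (mem_orthogonalGroup_iff' _ _).mp hU, Matrix.one_mul, hXtr]

theorem symTraceZero_le {n : ℕ} {W : Submodule ℝ (Matrix (Fin n) (Fin n) ℝ)}
    (hdiag : ∀ c : Fin n → ℝ, ∑ k, c k = 0 → diagonal c ∈ W)
    (hoff : ∀ k l, k ≠ l → single k l (1 : ℝ) + single l k 1 ∈ W) : symTraceZero n ≤ W := by
  rintro M ⟨hMsym, hMtr⟩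
  set N := M - diagonal fun k => M k k
  have hNN : N + N ∈ W := by
    rw [← (IsSymm.sub hMsym (isSymm_diagonal _)).sum_smul_single_add_single]
    refine W.sum_mem fun k _ => W.sum_mem fun l _ => ?_
    obtain rfl | hkl := eq_or_ne k l
    · simp
    · exact W.smul_mem _ (hoff k l hkl)
  have hM : M = diagonal (fun k => M k k) + (2⁻¹ : ℝ) • (N + N) := by
    rw [← two_smul ℝ N, smul_smul, inv_mul_cancel₀ two_ne_zero, one_smul, add_sub_cancel]
  rw [hM]
  exact W.add_mem (hdiag _ hMtr) (W.smul_mem _ hNN)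

theorem span_so_orbit_eq_symTraceZero_general (n : ℕ)
    (X : Matrix (Fin n) (Fin n) ℝ) (hX : X ≠ 0) (hXsym : Xᵀ = X) (hXtr : X.trace = 0) :
    Submodule.span ℝ {M | ∃ U ∈ Matrix.specialOrthogonalGroup (Fin n) ℝ, M = U * X * Uᵀ}
      = symTraceZero n := by
  have hH : X.IsHermitian := by rwa [IsHermitian, conjTranspose_eq_transpose_of_trivial]
  have hsum : ∑ k, hH.eigenvalues k = 0 := by simpa [hXtr] using hH.trace_eq_sum_eigenvalues.symm
  obtain ⟨i, j, hij⟩ := exists_apply_ne_of_sum_eq_zero (hH.eigenvalues_eq_zero_iff.not.mpr hX) hsum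
  have : Nonempty (Fin n) := ⟨i⟩
  obtain ⟨V, hV, hVX⟩ := exists_mem_specialOrthogonalGroup_conj_eq_diagonal hH
  have hdiag : ∀ c : Fin n → ℝ, ∑ k, c k = 0 → diagonal c ∈ soConjOrbitSpan X := fun c =>
    diagonal_mem_soConjOrbitSpan_of_sum_eq_zero (hVX ▸ Submodule.subset_span ⟨V, hV, rfl⟩) hij
  refine le_antisymm (Submodule.span_le.mpr ?_) (symTraceZero_le hdiag fun k l hkl =>
    single_add_single_mem_soConjOrbitSpan hkl (hdiag _ ?_))
  · rintro _ ⟨U, hU, rfl⟩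
    exact conj_mem_symTraceZero hU.1 ⟨hXsym, hXtr⟩
  · simp

/-- For `n ≥ 2`, the span of the `SO(n)`-orbit of a nonzero symmetric trace-zero
matrix is the whole space of symmetric trace-zero matrices. -/
theorem span_so_orbit_eq_symTraceZero (n : ℕ) (hn : 2 ≤ n)
    (X : Matrix (Fin n) (Fin n) ℝ) (hX : X ≠ 0) (hXsym : Xᵀ = X) (hXtr : X.trace = 0) :
    Submodule.span ℝ {M | ∃ U ∈ Matrix.specialOrthogonalGroup (Fin n) ℝ, M = U * X * Uᵀ}
      = symTraceZero n :=
  span_so_orbit_eq_symTraceZero_general n X hX hXsym hXtr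
end

section
/- For n ≥ 3, the commutant of SO(n) in M_n(ℂ) consists exactly of the complex scalar multiples of the identity matrix: if X ∈ M_n(ℂ) satisfies XU = UX for all U ∈ SO(n), then X = α·I_n for some α ∈ ℂ. -/
/-!
The special orthogonal group contains the diagonal sign matrices with two entries `-1` and the
permutation matrices of even permutations. Commuting with `diagonal ε` forces `X p q = 0`
whenever `ε p ≠ ε q`, and with three indices available any `p ≠ q` are separated by flipping
the signs at `p` and at a third index. Commuting with the permutation matrix of `σ` makes `X`
invariant under `σ`, and the 3-cycles move any index to any other, so the diagonal is constant.
-/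

open Equiv

namespace Fintype

theorem exists_ne_ne_of_three_le_card {α : Type*} [Fintype α] (h : 3 ≤ card α) (x y : α) :
    ∃ z, z ≠ x ∧ z ≠ y :=
  ENat.exists_ne_ne_of_three_le (by simpa using h) x y

end Fintype

namespace Matrix

variable {ι R S : Type*} [Fintype ι] [DecidableEq ι] [CommRing R] [CommRing S]

theorem permMatrix_mem_specialOrthogonalGroup {σ : Perm ι} (hσ : Perm.sign σ = 1) :
    σ.permMatrix R ∈ specialOrthogonalGroup ι R := by
  refine mem_specialOrthogonalGroup_iff.2 ⟨(mem_orthogonalGroup_iff ..).2 ?_, by simp [hσ]⟩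
  rw [transpose_permMatrix, ← permMatrix_mul, inv_mul_cancel, permMatrix_one]

theorem diagonal_mem_specialOrthogonalGroup {s : ι → R} (hsq : ∀ i, s i * s i = 1)
    (hprod : ∏ i, s i = 1) : diagonal s ∈ specialOrthogonalGroup ι R := by
  refine mem_specialOrthogonalGroup_iff.2
    ⟨(mem_orthogonalGroup_iff ..).2 ?_, by rwa [det_diagonal]⟩
  rw [diagonal_transpose, diagonal_mul_diagonal, ← diagonal_one]
  exact congrArg diagonal (funext hsq)

theorem diagonal_mulSingle_neg_one_mul_mem_specialOrthogonalGroup (p r : ι) :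
    diagonal (Pi.mulSingle p (-1 : R) * Pi.mulSingle r (-1)) ∈ specialOrthogonalGroup ι R := by
  have hsq (k i : ι) :
      (Pi.mulSingle k (-1) : ι → R) i * (Pi.mulSingle k (-1) : ι → R) i = 1 := by
    rcases eq_or_ne i k with rfl | hik <;> simp [*]
  refine diagonal_mem_specialOrthogonalGroup (fun i => ?_) ?_
  · simp only [Pi.mul_apply, mul_mul_mul_comm, hsq, mul_one]
  · simp [Finset.prod_mul_distrib]

theorem apply_apply_eq_of_commute_permMatrix {X : Matrix ι ι S} {σ : Perm ι}
    (h : Commute X (σ.permMatrix S)) (a b : ι) : X (σ a) (σ b) = X a b := by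
  have := congrFun (congrFun h.eq a) (σ b)
  rw [Perm.permMatrix, PEquiv.mul_toMatrix_toPEquiv, PEquiv.toMatrix_toPEquiv_mul] at this
  simpa using this.symm

theorem apply_eq_zero_of_commute_diagonal [NoZeroDivisors S] {X : Matrix ι ι S} {s : ι → S}
    (h : Commute X (diagonal s)) {p q : ι} (hpq : s p ≠ s q) : X p q = 0 := by
  have := congrFun (congrFun h.eq p) q
  rw [mul_diagonal, diagonal_mul] at this
  have : (s q - s p) * X p q = 0 := by linear_combination this
  exact (mul_eq_zero.1 this).resolve_left (sub_ne_zero.2 hpq.symm)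

section Commutant

variable {f : R →+* S} {X : Matrix ι ι S}

theorem apply_eq_zero_of_forall_commute_specialOrthogonalGroup [IsDomain S]
    (hS : ringChar S ≠ 2) (hι : 3 ≤ Fintype.card ι)
    (hX : ∀ U ∈ specialOrthogonalGroup ι R, Commute X (U.map f))
    {p q : ι} (hpq : p ≠ q) : X p q = 0 := by
  obtain ⟨r, hrp, hrq⟩ := Fintype.exists_ne_ne_of_three_le_card hι p q
  have h := hX _ (diagonal_mulSingle_neg_one_mul_mem_specialOrthogonalGroup p r)
  rw [diagonal_map (map_zero f)] at h
  refine apply_eq_zero_of_commute_diagonal h ?_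
  simpa [hpq.symm, hrp.symm, hrq.symm] using Ring.neg_one_ne_one_of_char_ne_two hS

theorem diag_apply_eq_of_forall_commute_specialOrthogonalGroup (hι : 3 ≤ Fintype.card ι)
    (hX : ∀ U ∈ specialOrthogonalGroup ι R, Commute X (U.map f)) (i j : ι) :
    X i i = X j j := by
  rcases eq_or_ne i j with rfl | hij
  · rfl
  obtain ⟨r, hri, hrj⟩ := Fintype.exists_ne_ne_of_three_le_card hι i j
  set σ := Equiv.swap i j * Equiv.swap j r
  have hσ : Perm.sign σ = 1 := by simp [σ, Perm.sign_swap hij, Perm.sign_swap hrj.symm]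
  have hσi : σ i = j := by simp [σ, swap_apply_of_ne_of_ne hij hri.symm]
  have h := hX _ (permMatrix_mem_specialOrthogonalGroup hσ)
  rw [Perm.permMatrix, PEquiv.map_toMatrix] at h
  rw [← apply_apply_eq_of_commute_permMatrix h, hσi]

theorem exists_eq_smul_one_of_forall_commute_specialOrthogonalGroup [IsDomain S]
    (hS : ringChar S ≠ 2) (hι : 3 ≤ Fintype.card ι)
    (hX : ∀ U ∈ specialOrthogonalGroup ι R, Commute X (U.map f)) :
    ∃ α : S, X = α • (1 : Matrix ι ι S) := by
  obtain ⟨i₀⟩ : Nonempty ι := Fintype.card_pos_iff.1 (by omega)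
  refine ⟨X i₀ i₀, ext fun a b => ?_⟩
  rcases eq_or_ne a b with rfl | hab
  · simp [diag_apply_eq_of_forall_commute_specialOrthogonalGroup hι hX a i₀]
  · simp [apply_eq_zero_of_forall_commute_specialOrthogonalGroup hS hι hX hab, hab]

end Commutant

end Matrix

/-- For `n ≥ 3`, the commutant of `SO(n)` in `M_n(ℂ)` consists exactly of the
scalar matrices. -/
theorem so_commutant_scalar (n : ℕ) (hn : 3 ≤ n) (X : Matrix (Fin n) (Fin n) ℂ)
    (hX : ∀ U ∈ Matrix.specialOrthogonalGroup (Fin n) ℝ,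
      X * U.map Complex.ofReal = U.map Complex.ofReal * X) :
    ∃ α : ℂ, X = α • (1 : Matrix (Fin n) (Fin n) ℂ) :=
  Matrix.exists_eq_smul_one_of_forall_commute_specialOrthogonalGroup (f := Complex.ofRealHom)
    (by simp [ringChar.eq_zero]) (by simpa using hn) hX
end

section
/- For n ≥ 2, the normalizer of the group Õ(n) := {λU : λ ∈ ℂ, |λ| = 1, U ∈ O(n)} in U(n) equals Õ(n) itself; equivalently, the normalizer in U(n) of the subgroup generated by SO(n) and the unimodular scalar matrices 𝕋·I_n is the subgroup generated by O(n) and 𝕋·I_n. -/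
/-!
If `U` normalizes `Õ(n)`, then for every real orthogonal `O` the matrix `U O U⋆` lies in `Õ(n)`, so
`(U O U⋆)(U O U⋆)ᵀ` is a scalar; equivalently the symmetric matrix `B = U⋆ (U⋆)ᵀ` satisfies
`O B Oᵀ ∈ ℂ B` for all `O ∈ O(n)`. Hence the complex quadratic form `q x = xᵀ B x` on `ℝⁿ` is only
rescaled by orthogonal maps. The Householder reflection in `x - y` sends `x` to `y` whenever
`|x| = |y|` and negates `x - y`; so either `q (x - y) ≠ 0` and the reflection preserves `q`, or `q`
vanishes on a nonzero vector, hence on its whole sphere and by homogeneity everywhere. Either way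
`q` is constant on spheres, which forces `B` to be scalar. Finally a unitary `V` with `V Vᵀ = β • 1`
is a unimodular multiple of a real orthogonal matrix (divide by a square root of `β`); apply this
to `V = U⋆`.
-/

open Matrix

/-- `Õ(n) = {λU : λ ∈ 𝕋, U ∈ O(n)}`, the subgroup of `U(n)` generated by `O(n)` and the
unimodular scalar matrices, viewed as a set of complex matrices. -/
def OTildeSet (n : ℕ) : Set (Matrix (Fin n) (Fin n) ℂ) :=
  {M | ∃ (l : ℂ) (O : Matrix (Fin n) (Fin n) ℝ), ‖l‖ = 1 ∧
    O ∈ Matrix.orthogonalGroup (Fin n) ℝ ∧ M = l • O.map Complex.ofReal}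

section Householder

variable {ι : Type*} [Fintype ι] [DecidableEq ι]

/-- Since `2 / 0 = 0`, `householder 0 = 1`. -/
noncomputable def householder (v : ι → ℝ) : Matrix ι ι ℝ :=
  1 - (2 / (v ⬝ᵥ v)) • vecMulVec v v

theorem householder_mulVec (v x : ι → ℝ) :
    householder v *ᵥ x = x - (2 / (v ⬝ᵥ v) * (v ⬝ᵥ x)) • v := by
  simp [householder, sub_mulVec, smul_mulVec, vecMulVec_mulVec, smul_smul]

theorem householder_mem_orthogonalGroup (v : ι → ℝ) : householder v ∈ orthogonalGroup ι ℝ := by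
  have hc : (2 / (v ⬝ᵥ v)) ^ 2 * (v ⬝ᵥ v) = 2 * (2 / (v ⬝ᵥ v)) := by
    rcases eq_or_ne (v ⬝ᵥ v) 0 with h | h
    · simp [h]
    · field_simp
  rw [mem_orthogonalGroup_iff]
  simp only [householder, transpose_sub, transpose_one, transpose_smul, transpose_vecMulVec,
    Matrix.sub_mul, Matrix.mul_sub, Matrix.one_mul, Matrix.mul_one, Matrix.smul_mul,
    Matrix.mul_smul, vecMulVec_mul_vecMulVec, vecMulVec_smul, smul_smul]
  linear_combination (norm := module) hc • vecMulVec v v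

theorem householder_mulVec_self (v : ι → ℝ) : householder v *ᵥ v = -v := by
  rcases eq_or_ne v 0 with rfl | hv
  · simp
  have : v ⬝ᵥ v ≠ 0 := dotProduct_self_eq_zero.not.2 hv
  rw [householder_mulVec, div_mul_cancel₀ _ this]
  module

theorem householder_sub_mulVec {x y : ι → ℝ} (h : x ⬝ᵥ x = y ⬝ᵥ y) :
    householder (x - y) *ᵥ x = y := by
  rcases eq_or_ne (x - y) 0 with hxy | hxy
  · obtain rfl := sub_eq_zero.1 hxy
    simp [householder]
  have hd : (x - y) ⬝ᵥ (x - y) = 2 * ((x - y) ⬝ᵥ x) := by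
    simp only [sub_dotProduct, dotProduct_sub, dotProduct_comm y x, h]
    ring
  have : (x - y) ⬝ᵥ x ≠ 0 := fun h0 =>
    hxy (dotProduct_self_eq_zero.1 (by rw [hd, h0, mul_zero]))
  rw [householder_mulVec, hd, div_mul_eq_div_div, div_self two_ne_zero, one_div_mul_cancel this]
  module

end Householder

section Invariant

variable {ι : Type*} [Fintype ι] [DecidableEq ι] {K : Type*} [Field K] [Module ℝ K]

theorem apply_eq_of_dotProduct_self_eq {f : (ι → ℝ) → K}
    (hf : ∀ (t : ℝ) x, f (t • x) = t ^ 2 • f x)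
    (hO : ∀ O ∈ orthogonalGroup ι ℝ, ∃ μ : K, ∀ x, f (O *ᵥ x) = μ * f x)
    {x y : ι → ℝ} (hxy : x ⬝ᵥ x = y ⬝ᵥ y) : f x = f y := by
  have hneg (v : ι → ℝ) : f (-v) = f v := by simpa using hf (-1) v
  have hmove (x y : ι → ℝ) (h : x ⬝ᵥ x = y ⬝ᵥ y) :
      ∃ μ : K, f y = μ * f x ∧ f (x - y) = μ * f (x - y) := by
    obtain ⟨μ, hμ⟩ := hO _ (householder_mem_orthogonalGroup (x - y))
    refine ⟨μ, ?_, ?_⟩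
    · rw [← hμ, householder_sub_mulVec h]
    · rw [← hμ, householder_mulVec_self, hneg]
  -- a zero of `f` spreads over its sphere, and by homogeneity to every vector
  have hzero (z : ι → ℝ) (hz : z ≠ 0) (hfz : f z = 0) (w : ι → ℝ) : f w = 0 := by
    rcases eq_or_ne w 0 with rfl | hw
    · simpa using hf 0 z
    have hz' : 0 < z ⬝ᵥ z := by simpa using dotProduct_star_self_pos_iff.2 hz
    have hw' : 0 < w ⬝ᵥ w := by simpa using dotProduct_star_self_pos_iff.2 hw
    set t := √(z ⬝ᵥ z / w ⬝ᵥ w)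
    have ht : t ≠ 0 := (Real.sqrt_pos.2 (div_pos hz' hw')).ne'
    have hnorm : z ⬝ᵥ z = (t • w) ⬝ᵥ (t • w) := by
      rw [smul_dotProduct, dotProduct_smul, smul_eq_mul, smul_eq_mul, ← mul_assoc,
        Real.mul_self_sqrt (div_pos hz' hw').le, div_mul_cancel₀ _ hw'.ne']
    obtain ⟨μ, hμ, -⟩ := hmove z (t • w) hnorm
    rw [hf, hfz, mul_zero] at hμ
    exact (smul_eq_zero.1 hμ).resolve_left (pow_ne_zero 2 ht)
  obtain ⟨μ, hμy, hμd⟩ := hmove x y hxy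
  by_cases hd : f (x - y) = 0
  · rcases eq_or_ne (x - y) 0 with hxy' | hxy'
    · rw [sub_eq_zero.1 hxy']
    · rw [hzero _ hxy' hd x, hzero _ hxy' hd y]
  · rw [hμy, (mul_eq_right₀ hd).1 hμd.symm, one_mul]

end Invariant

theorem Complex.ofReal_comp_single_one {ι : Type*} [DecidableEq ι] (i : ι) :
    Complex.ofReal ∘ (Pi.single i 1 : ι → ℝ) = Pi.single i 1 := by
  ext j
  simpa using Pi.apply_single (fun _ => Complex.ofReal) (fun _ => Complex.ofReal_zero) i 1 j

section QuadForm

variable {ι : Type*} [Fintype ι]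

def realQuadForm (B : Matrix ι ι ℂ) (x : ι → ℝ) : ℂ :=
  (Complex.ofReal ∘ x) ⬝ᵥ B *ᵥ (Complex.ofReal ∘ x)

theorem realQuadForm_smul (B : Matrix ι ι ℂ) (t : ℝ) (x : ι → ℝ) :
    realQuadForm B (t • x) = t ^ 2 • realQuadForm B x := by
  have : Complex.ofReal ∘ (t • x) = (t : ℂ) • (Complex.ofReal ∘ x) := by ext; simp
  simp only [realQuadForm, this, mulVec_smul, dotProduct_smul, smul_dotProduct, smul_eq_mul,
    Complex.real_smul]
  push_cast
  ring

theorem realQuadForm_mulVec (B : Matrix ι ι ℂ) (O : Matrix ι ι ℝ) (x : ι → ℝ) :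
    realQuadForm B (O *ᵥ x) =
      realQuadForm ((O.map Complex.ofReal)ᵀ * B * O.map Complex.ofReal) x := by
  have : Complex.ofReal ∘ (O *ᵥ x) = O.map Complex.ofReal *ᵥ (Complex.ofReal ∘ x) :=
    funext (Complex.ofRealHom.map_mulVec O x)
  simp only [realQuadForm, this, ← mulVec_mulVec, dotProduct_mulVec _ (O.map _)ᵀ,
    vecMul_transpose]

theorem realQuadForm_single [DecidableEq ι] (B : Matrix ι ι ℂ) (i : ι) :
    realQuadForm B (Pi.single i 1) = B i i := by
  simp [realQuadForm, Complex.ofReal_comp_single_one]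

theorem realQuadForm_single_add_sub_realQuadForm_single_sub [DecidableEq ι] (B : Matrix ι ι ℂ)
    (i j : ι) :
    realQuadForm B (Pi.single i 1 + Pi.single j 1) -
      realQuadForm B (Pi.single i 1 - Pi.single j 1) = 2 * (B i j + B j i) := by
  have hadd : Complex.ofReal ∘ (Pi.single i 1 + Pi.single j 1 : ι → ℝ) =
      Pi.single i 1 + Pi.single j 1 := by
    ext; simp [← Complex.ofReal_comp_single_one]
  have hsub : Complex.ofReal ∘ (Pi.single i 1 - Pi.single j 1 : ι → ℝ) =
      Pi.single i 1 - Pi.single j 1 := by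
    ext; simp [← Complex.ofReal_comp_single_one]
  simp only [realQuadForm, hadd, hsub, mulVec_add, mulVec_sub, add_dotProduct, sub_dotProduct,
    dotProduct_add, dotProduct_sub, mulVec_single_one, single_dotProduct, col_apply, one_mul]
  ring

theorem exists_eq_smul_one_of_orthogonal_conj [DecidableEq ι] {B : Matrix ι ι ℂ} (hB : Bᵀ = B)
    (h : ∀ O ∈ orthogonalGroup ι ℝ, ∃ μ : ℂ,
      O.map Complex.ofReal * B * (O.map Complex.ofReal)ᵀ = μ • B) :
    ∃ b : ℂ, B = b • 1 := by
  have hq {x y : ι → ℝ} (hxy : x ⬝ᵥ x = y ⬝ᵥ y) : realQuadForm B x = realQuadForm B y := by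
    refine apply_eq_of_dotProduct_self_eq (realQuadForm_smul B) (fun O hO => ?_) hxy
    obtain ⟨μ, hμ⟩ := h Oᵀ (transpose_mem_unitaryGroup_iff.2 hO)
    refine ⟨μ, fun x => ?_⟩
    rw [transpose_map, transpose_transpose] at hμ
    rw [realQuadForm_mulVec, hμ]
    simp only [realQuadForm, smul_mulVec, dotProduct_smul, smul_eq_mul]
  have hdiag (i j : ι) : B i i = B j j := by
    rw [← realQuadForm_single B i, ← realQuadForm_single B j]
    exact hq (by simp)
  have hoff (i j : ι) (hij : i ≠ j) : B i j = 0 := by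
    have := realQuadForm_single_add_sub_realQuadForm_single_sub B i j
    rw [hq (y := Pi.single i 1 - Pi.single j 1) (by simp [hij, hij.symm]), sub_self] at this
    have hji : B j i = B i j := congrFun₂ hB i j
    rw [hji] at this
    linear_combination -this / 4
  rcases isEmpty_or_nonempty ι with _ | ⟨⟨i₀⟩⟩
  · exact ⟨0, Subsingleton.elim _ _⟩
  refine ⟨B i₀ i₀, ext fun i j => ?_⟩
  rcases eq_or_ne i j with rfl | hij
  · simp [hdiag i i₀]
  · simp [hoff i j hij, hij]

end QuadForm

theorem Complex.mem_unitary_iff_norm_eq_one {z : ℂ} : z ∈ unitary ℂ ↔ ‖z‖ = 1 := by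
  refine ⟨CStarRing.norm_of_mem_unitary, fun h => Unitary.mem_iff_self_mul_star.2 ?_⟩
  rw [star_def, Complex.mul_conj', h]
  norm_num

theorem map_ofReal_mul {l m n : Type*} [Fintype m] (A : Matrix l m ℝ) (B : Matrix m n ℝ) :
    (A * B).map Complex.ofReal = A.map Complex.ofReal * B.map Complex.ofReal :=
  Matrix.map_mul (f := Complex.ofRealHom)

section Matrices

variable {ι : Type*} [Fintype ι] [DecidableEq ι]

theorem map_ofReal_mem_unitaryGroup {O : Matrix ι ι ℝ} (hO : O ∈ orthogonalGroup ι ℝ) :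
    O.map Complex.ofReal ∈ unitaryGroup ι ℂ := by
  rw [mem_unitaryGroup_iff, star_eq_conjTranspose,
    ← conjTranspose_map _ (fun _ => (Complex.conj_ofReal _).symm),
    conjTranspose_eq_transpose_of_trivial, ← map_ofReal_mul, (mem_orthogonalGroup_iff _ _).1 hO,
    Matrix.map_one _ Complex.ofReal_zero Complex.ofReal_one]

theorem exists_orthogonal_map_ofReal_eq {N : Matrix ι ι ℂ} (hN : N ∈ unitaryGroup ι ℂ)
    (h : N * Nᵀ = 1) : ∃ O ∈ orthogonalGroup ι ℝ, O.map Complex.ofReal = N := by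
  have hstar : star N = Nᵀ := by
    calc star N = star N * (N * Nᵀ) := by rw [h, Matrix.mul_one]
      _ = Nᵀ := by rw [← Matrix.mul_assoc, mem_unitaryGroup_iff'.1 hN, Matrix.one_mul]
  have hmap : (N.map Complex.re).map Complex.ofReal = N :=
    ext fun i j => Complex.conj_eq_iff_re.1 (congrFun₂ hstar j i)
  refine ⟨N.map Complex.re, ?_, hmap⟩
  rw [mem_orthogonalGroup_iff]
  apply map_injective Complex.ofReal_injective
  dsimp only
  rw [map_ofReal_mul, transpose_map, hmap, h,
    Matrix.map_one _ Complex.ofReal_zero Complex.ofReal_one]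

end Matrices

theorem conj_mul_transpose_eq_smul {ι R : Type*} [Fintype ι] [DecidableEq ι] [CommRing R]
    [StarRing R] {U A : Matrix ι ι R} (hU : U ∈ unitaryGroup ι R) {μ : R}
    (h : U * A * star U * (U * A * star U)ᵀ = μ • 1) :
    A * (star U * (star U)ᵀ) * Aᵀ = μ • (star U * (star U)ᵀ) := by
  have hUU : star U * U = 1 := mem_unitaryGroup_iff'.1 hU
  calc A * (star U * (star U)ᵀ) * Aᵀ
      = star U * U * A * (star U * (star U)ᵀ) * Aᵀ * (star U * U)ᵀ := by
        rw [hUU, transpose_one, Matrix.one_mul, Matrix.mul_one]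
    _ = star U * (U * A * star U * (U * A * star U)ᵀ) * (star U)ᵀ := by
        simp only [transpose_mul, Matrix.mul_assoc]
    _ = μ • (star U * (star U)ᵀ) := by
        rw [h, Matrix.mul_smul, Matrix.mul_one, Matrix.smul_mul]

theorem norm_eq_one_of_smul_one_mem_unitaryGroup {ι : Type*} [Fintype ι] [DecidableEq ι]
    [Nonempty ι] {μ : ℂ} (h : μ • (1 : Matrix ι ι ℂ) ∈ unitaryGroup ι ℂ) : ‖μ‖ = 1 := by
  rw [mem_unitaryGroup_iff, star_smul, star_one, Matrix.smul_mul, Matrix.mul_smul, Matrix.mul_one,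
    smul_smul] at h
  have := congrFun₂ h (Classical.arbitrary ι) (Classical.arbitrary ι)
  simp only [Matrix.smul_apply, one_apply_eq, smul_eq_mul, mul_one] at this
  exact Complex.mem_unitary_iff_norm_eq_one.1 (Unitary.mem_iff_self_mul_star.2 this)

section OTilde

variable {n : ℕ}

theorem OTildeSet_subset_unitaryGroup : OTildeSet n ⊆ unitaryGroup (Fin n) ℂ := by
  rintro _ ⟨l, O, hl, hO, rfl⟩
  exact Unitary.smul_mem_of_mem (Complex.mem_unitary_iff_norm_eq_one.2 hl)
    (map_ofReal_mem_unitaryGroup hO)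

theorem mul_mem_OTildeSet {M N : Matrix (Fin n) (Fin n) ℂ} (hM : M ∈ OTildeSet n)
    (hN : N ∈ OTildeSet n) : M * N ∈ OTildeSet n := by
  obtain ⟨l, O, hl, hO, rfl⟩ := hM
  obtain ⟨l', O', hl', hO', rfl⟩ := hN
  refine ⟨l * l', O * O', by rw [norm_mul, hl, hl', one_mul], mul_mem hO hO', ?_⟩
  rw [Matrix.smul_mul, Matrix.mul_smul, smul_smul, map_ofReal_mul]

theorem star_mem_OTildeSet {M : Matrix (Fin n) (Fin n) ℂ} (hM : M ∈ OTildeSet n) :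
    star M ∈ OTildeSet n := by
  obtain ⟨l, O, hl, hO, rfl⟩ := hM
  refine ⟨star l, star O, by rwa [Complex.star_def, Complex.norm_conj], Unitary.star_mem hO, ?_⟩
  rw [star_smul, star_eq_conjTranspose, star_eq_conjTranspose,
    ← conjTranspose_map _ (fun _ => (Complex.conj_ofReal _).symm)]

theorem image_conj_OTildeSet_of_mem {U : Matrix (Fin n) (Fin n) ℂ} (hU : U ∈ OTildeSet n) :
    (fun M => U * M * star U) '' OTildeSet n = OTildeSet n := by
  have hUU : U * star U = 1 := mem_unitaryGroup_iff.1 (OTildeSet_subset_unitaryGroup hU)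
  ext N
  constructor
  · rintro ⟨M, hM, rfl⟩
    exact mul_mem_OTildeSet (mul_mem_OTildeSet hU hM) (star_mem_OTildeSet hU)
  · intro hN
    refine ⟨star U * N * U,
      mul_mem_OTildeSet (mul_mem_OTildeSet (star_mem_OTildeSet hU) hN) hU, ?_⟩
    simp only [← Matrix.mul_assoc, hUU, Matrix.one_mul]
    rw [Matrix.mul_assoc, hUU, Matrix.mul_one]

theorem mem_OTildeSet_iff [NeZero n] {M : Matrix (Fin n) (Fin n) ℂ} :
    M ∈ OTildeSet n ↔ M ∈ unitaryGroup (Fin n) ℂ ∧ ∃ μ : ℂ, M * Mᵀ = μ • 1 := by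
  refine ⟨fun hM => ⟨OTildeSet_subset_unitaryGroup hM, ?_⟩, fun ⟨hM, μ, hμ⟩ => ?_⟩
  · obtain ⟨l, O, -, hO, rfl⟩ := hM
    refine ⟨l ^ 2, ?_⟩
    rw [transpose_smul, Matrix.smul_mul, Matrix.mul_smul, smul_smul, ← transpose_map,
      ← map_ofReal_mul, (mem_orthogonalGroup_iff _ _).1 hO,
      Matrix.map_one _ Complex.ofReal_zero Complex.ofReal_one, sq]
  have hμ1 : ‖μ‖ = 1 := norm_eq_one_of_smul_one_mem_unitaryGroup
    (hμ ▸ mul_mem hM (transpose_mem_unitaryGroup_iff.2 hM))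
  obtain ⟨z, hz⟩ := IsAlgClosed.exists_pow_nat_eq μ two_pos
  have hz1 : ‖z‖ = 1 := by
    rwa [← pow_eq_one_iff_of_nonneg (norm_nonneg z) two_ne_zero, ← norm_pow, hz]
  have hzu : z ∈ unitary ℂ := Complex.mem_unitary_iff_norm_eq_one.2 hz1
  obtain ⟨O, hO, hON⟩ := exists_orthogonal_map_ofReal_eq
    (Unitary.smul_mem_of_mem (Unitary.star_mem hzu) hM) (N := star z • M) (by
      rw [transpose_smul, Matrix.smul_mul, Matrix.mul_smul, hμ, smul_smul, smul_smul, ← hz, sq,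
        ← mul_assoc, mul_assoc (star z), Unitary.star_mul_self_of_mem hzu, mul_one,
        Unitary.star_mul_self_of_mem hzu, one_smul])
  refine ⟨z, O, hz1, hO, ?_⟩
  rw [hON, smul_smul, Unitary.mul_star_self_of_mem hzu, one_smul]

end OTilde

/-- For `n ≥ 2`, the normalizer of `Õ(n)` in `U(n)` is `Õ(n)` itself: a unitary
`U` satisfies `U Õ(n) U⁻¹ = Õ(n)` if and only if `U ∈ Õ(n)`. -/
theorem normalizer_OTilde_eq_OTilde (n : ℕ) (hn : 2 ≤ n)
    (U : Matrix (Fin n) (Fin n) ℂ) (hU : U ∈ Matrix.unitaryGroup (Fin n) ℂ) :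
    (fun M => U * M * star U) '' OTildeSet n = OTildeSet n ↔ U ∈ OTildeSet n := by
  have : NeZero n := ⟨by omega⟩
  refine ⟨fun himg => ?_, image_conj_OTildeSet_of_mem⟩
  obtain ⟨b, hb⟩ : ∃ b : ℂ, star U * (star U)ᵀ = b • 1 := by
    refine exists_eq_smul_one_of_orthogonal_conj (by rw [transpose_mul, transpose_transpose])
      fun O hO => ?_
    have hO' : U * O.map Complex.ofReal * star U ∈ OTildeSet n :=
      himg ▸ ⟨_, ⟨1, O, norm_one, hO, (one_smul _ _).symm⟩, rfl⟩
    obtain ⟨μ, hμ⟩ := (mem_OTildeSet_iff.1 hO').2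
    exact ⟨μ, conj_mul_transpose_eq_smul hU hμ⟩
  simpa using star_mem_OTildeSet (mem_OTildeSet_iff.2 ⟨Unitary.star_mem hU, b, hb⟩)
end

section
/- For n ≥ 2, any real Lie subalgebra 𝔤 of 𝔲(n) with 𝔰𝔬(n) ⊕ iℝ·I_n ⊆ 𝔤 satisfies either 𝔤 = 𝔰𝔬(n) ⊕ iℝ·I_n or 𝔤 = 𝔲(n). -/
/-!
Put `W = {S real : i S ∈ 𝔤}`. Since `𝔰𝔬(n) ⊆ 𝔤 ⊆ 𝔲(n)`, we have `𝔤 = 𝔰𝔬(n) ⊕ i W`, and `W` is a space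
of real symmetric matrices containing `1` and stable under `[A, ·]` for every real skew-symmetric `A`.
If `W` contains a non-scalar `S`, pick `p ≠ q` with `S p q ≠ 0` or `S p p ≠ S q q` and let
`K = E_pq - E_qp`. Then `ad_K⁴ S + ad_K² S` is a nonzero combination of `C = E_pq + E_qp` and
`D = E_pp - E_qq`, a plane on which `ad_K` acts as a rotation, so `C ∈ W`. Brackets with further
rotation generators move the indices of `C` anywhere and produce every `E_rr - E_ss`; together with `1`
these span all symmetric matrices, so `𝔤 = 𝔲(n)`.
-/

open Matrix

lemma Submodule.mem_of_smul_add_smul_mem {M : Type*} [AddCommGroup M] [Module ℝ M]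
    {V : Submodule ℝ M} {x y : M} {a b : ℝ} (hab : a ≠ 0 ∨ b ≠ 0)
    (h₁ : a • x + b • y ∈ V) (h₂ : a • y - b • x ∈ V) : x ∈ V := by
  have hnorm : a ^ 2 + b ^ 2 ≠ 0 := by
    rcases hab with h | h <;> positivity
  have hcomb : (a ^ 2 + b ^ 2) • x = a • (a • x + b • y) - b • (a • y - b • x) := by module
  rw [← V.smul_mem_iff hnorm, hcomb]
  exact V.sub_mem (V.smul_mem a h₁) (V.smul_mem b h₂)

namespace Matrix

section PlaneRotations

variable {ι : Type*} [DecidableEq ι]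

def planeRot (p q : ι) : Matrix ι ι ℝ := single p q 1 - single q p 1

def planeSym (p q : ι) : Matrix ι ι ℝ := single p q 1 + single q p 1

def planeDiag (p q : ι) : Matrix ι ι ℝ := single p p 1 - single q q 1

lemma planeSym_comm (p q : ι) : planeSym p q = planeSym q p := add_comm _ _

lemma planeRot_transpose (p q : ι) : (planeRot p q)ᵀ = -planeRot p q := by
  simp [planeRot]

variable [Fintype ι] {p q : ι}

lemma lie_planeRot_apply (p q : ι) (S : Matrix ι ι ℝ) (a b : ι) :
    ⁅planeRot p q, S⁆ a b = (if p = a then S q b else 0) - (if q = a then S p b else 0)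
      - ((if q = b then S a p else 0) - (if p = b then S a q else 0)) := by
  simp [planeRot, Ring.lie_def, sub_mul, mul_sub, mul_apply, single_apply, ite_and]

/- `ad_K` for `K = planeRot p q` has eigenvalues `±2i` on the span of `planeSym p q` and
`planeDiag p q`, eigenvalues `±i` on the entries coupling `p` or `q` to a third index, and `0` elsewhere.
So `ad_K⁴ + ad_K² = ad_K² (ad_K² + 1)` is `12` times the orthogonal projection onto that span. -/
lemma lie_planeRot_four_add_lie_planeRot_two (hpq : p ≠ q) (S : Matrix ι ι ℝ) :
    ⁅planeRot p q, ⁅planeRot p q, ⁅planeRot p q, ⁅planeRot p q, S⁆⁆⁆⁆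
        + ⁅planeRot p q, ⁅planeRot p q, S⁆⁆
      = (6 : ℝ) • ((S p q + S q p) • planeSym p q + (S p p - S q q) • planeDiag p q) := by
  ext a b
  simp only [lie_planeRot_apply, add_apply, smul_apply, smul_eq_mul, planeSym, planeDiag, sub_apply,
    single_apply]
  by_cases hap : a = p <;> by_cases haq : a = q <;> by_cases hbp : b = p <;>
    by_cases hbq : b = q <;> simp_all [eq_comm] <;> ring

lemma lie_planeRot_smul_planeSym_add_smul_planeDiag (hpq : p ≠ q) (a b : ℝ) :
    ⁅planeRot p q, a • planeSym p q + b • planeDiag p q⁆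
      = (2 : ℝ) • (a • planeDiag p q - b • planeSym p q) := by
  ext i j
  simp only [lie_planeRot_apply, smul_apply, smul_eq_mul, planeSym, planeDiag, add_apply, sub_apply,
    single_apply]
  by_cases hip : i = p <;> by_cases hiq : i = q <;> by_cases hjp : j = p <;>
    by_cases hjq : j = q <;> simp_all [eq_comm] <;> ring

lemma lie_planeRot_planeSym (hpq : p ≠ q) :
    ⁅planeRot p q, planeSym p q⁆ = (2 : ℝ) • planeDiag p q := by
  simpa using lie_planeRot_smul_planeSym_add_smul_planeDiag hpq 1 0

lemma lie_planeRot_planeSym_of_ne {r : ι} (hpq : p ≠ q) (hpr : p ≠ r) (hqr : q ≠ r) :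
    ⁅planeRot p r, planeSym p q⁆ = -planeSym r q := by
  ext a b
  simp only [lie_planeRot_apply, neg_apply, planeSym, add_apply, single_apply]
  by_cases hap : a = p <;> by_cases haq : a = q <;> by_cases har : a = r <;> by_cases hbp : b = p <;>
    by_cases hbq : b = q <;> by_cases hbr : b = r <;> simp_all [eq_comm]

lemma two_smul_eq_sum_planeSym {T : Matrix ι ι ℝ} (hT : T.IsSymm) :
    (2 : ℝ) • T = ∑ a, ∑ b, T a b • planeSym a b := by
  ext i j
  simp only [smul_apply, smul_eq_mul, planeSym, smul_add, smul_single, mul_one,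
    Finset.sum_add_distrib, Matrix.sum_apply, add_apply, single_apply, ite_and, Finset.sum_ite_irrel,
    Finset.sum_ite_eq', Finset.mem_univ, if_true, Finset.sum_const_zero, hT.apply i j]
  ring

lemma card_smul_single_self (a : ι) :
    (Fintype.card ι : ℝ) • single a a (1 : ℝ) = 1 + ∑ b, planeDiag a b := by
  rw [← sum_single_one]
  simp [planeDiag, Finset.sum_sub_distrib]

end PlaneRotations

section InvariantSubspaces

variable {ι : Type*} [DecidableEq ι]

lemma mem_span_one_of_forall_ne {S : Matrix ι ι ℝ}
    (hS : ∀ p q, p ≠ q → S p q = 0 ∧ S p p = S q q) : S ∈ ℝ ∙ (1 : Matrix ι ι ℝ) := by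
  rcases isEmpty_or_nonempty ι with hι | ⟨⟨i₀⟩⟩
  · simp [Subsingleton.elim S 0]
  refine Submodule.mem_span_singleton.2 ⟨S i₀ i₀, ?_⟩
  ext a b
  rcases eq_or_ne a b with rfl | hab
  · rcases eq_or_ne i₀ a with rfl | ha
    · simp
    · simp [(hS i₀ a ha).2]
  · simp [hab, (hS a b hab).1]

variable [Fintype ι] {V : Submodule ℝ (Matrix ι ι ℝ)} {p q : ι}

lemma planeSym_mem_of_apply_ne (hV : ∀ A : Matrix ι ι ℝ, Aᵀ = -A → ∀ S ∈ V, ⁅A, S⁆ ∈ V)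
    {S : Matrix ι ι ℝ} (hS : S ∈ V) (hpq : p ≠ q) (h : S p q + S q p ≠ 0 ∨ S p p - S q q ≠ 0) :
    planeSym p q ∈ V := by
  have ad_mem : ∀ X ∈ V, ⁅planeRot p q, X⁆ ∈ V := hV _ (planeRot_transpose p q)
  have hx : (S p q + S q p) • planeSym p q + (S p p - S q q) • planeDiag p q ∈ V := by
    rw [← V.smul_mem_iff (by norm_num : (6 : ℝ) ≠ 0), ← lie_planeRot_four_add_lie_planeRot_two hpq]
    exact V.add_mem (ad_mem _ (ad_mem _ (ad_mem _ (ad_mem _ hS)))) (ad_mem _ (ad_mem _ hS))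
  have hy : (S p q + S q p) • planeDiag p q - (S p p - S q q) • planeSym p q ∈ V := by
    rw [← V.smul_mem_iff (two_ne_zero (α := ℝ)),
      ← lie_planeRot_smul_planeSym_add_smul_planeDiag hpq]
    exact ad_mem _ hx
  exact Submodule.mem_of_smul_add_smul_mem h hx hy

lemma planeSym_mem_of_ne (hV : ∀ A : Matrix ι ι ℝ, Aᵀ = -A → ∀ S ∈ V, ⁅A, S⁆ ∈ V)
    (hpq : p ≠ q) (hC : planeSym p q ∈ V) {r s : ι} (hrs : r ≠ s) : planeSym r s ∈ V := by
  have step : ∀ a b c : ι, a ≠ b → a ≠ c → b ≠ c → planeSym a b ∈ V → planeSym c b ∈ V := by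
    intro a b c hab hac hbc h
    rw [← neg_mem_iff, ← lie_planeRot_planeSym_of_ne hab hac hbc]
    exact hV _ (planeRot_transpose a c) _ h
  have hq : ∀ r, r ≠ q → planeSym r q ∈ V := by
    intro r hrq
    rcases eq_or_ne r p with rfl | hrp
    · exact hC
    · exact step p q r hpq hrp.symm hrq.symm hC
  rcases eq_or_ne s q with rfl | hsq
  · exact hq r hrs
  rw [planeSym_comm]
  rcases eq_or_ne r q with rfl | hrq
  · exact hq s hsq
  exact step q r s hrq.symm hsq.symm hrs (planeSym_comm r q ▸ hq r hrq)

lemma mem_of_isSymm (hV : ∀ A : Matrix ι ι ℝ, Aᵀ = -A → ∀ S ∈ V, ⁅A, S⁆ ∈ V)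
    (h1 : 1 ∈ V) (hpq : p ≠ q) (hC : planeSym p q ∈ V) {T : Matrix ι ι ℝ} (hT : T.IsSymm) :
    T ∈ V := by
  have hdiag : ∀ a b : ι, planeDiag a b ∈ V := by
    intro a b
    rcases eq_or_ne a b with rfl | hab
    · simp [planeDiag]
    rw [← V.smul_mem_iff (two_ne_zero (α := ℝ)), ← lie_planeRot_planeSym hab]
    exact hV _ (planeRot_transpose a b) _ (planeSym_mem_of_ne hV hpq hC hab)
  have hsym : ∀ a b : ι, planeSym a b ∈ V := by
    intro a b
    rcases eq_or_ne a b with rfl | hab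
    · have hcard : (Fintype.card ι : ℝ) ≠ 0 := Nat.cast_ne_zero.2 (Fintype.card_pos_iff.2 ⟨a⟩).ne'
      rw [← V.smul_mem_iff hcard, planeSym, ← two_smul ℝ, smul_comm, card_smul_single_self]
      exact V.smul_mem _ (V.add_mem h1 (V.sum_mem fun b _ => hdiag a b))
    · exact planeSym_mem_of_ne hV hpq hC hab
  rw [← V.smul_mem_iff (two_ne_zero (α := ℝ)), two_smul_eq_sum_planeSym hT]
  exact V.sum_mem fun a _ => V.sum_mem fun b _ => V.smul_mem _ (hsym a b)

theorem le_span_one_or_forall_isSymm_mem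
    (hV : ∀ A : Matrix ι ι ℝ, Aᵀ = -A → ∀ S ∈ V, ⁅A, S⁆ ∈ V)
    (h1 : 1 ∈ V) (hVsymm : ∀ S ∈ V, S.IsSymm) :
    V ≤ ℝ ∙ 1 ∨ ∀ T : Matrix ι ι ℝ, T.IsSymm → T ∈ V := by
  by_cases h : ∃ S ∈ V, ∃ p q, p ≠ q ∧ (S p q ≠ 0 ∨ S p p ≠ S q q)
  · obtain ⟨S, hS, p, q, hpq, hne⟩ := h
    refine Or.inr fun T hT => mem_of_isSymm hV h1 hpq (planeSym_mem_of_apply_ne hV hS hpq ?_) hT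
    rw [(hVsymm S hS).apply p q, sub_ne_zero, ← two_mul]
    exact hne.imp_left (mul_ne_zero two_ne_zero)
  · push Not at h
    exact Or.inl fun S hS => mem_span_one_of_forall_ne fun p q hpq => h S hS p q hpq

end InvariantSubspaces

section SkewHermitian

variable {ι : Type*}

lemma map_re_add_map_im (M : Matrix ι ι ℂ) :
    (M.map Complex.re).map Complex.ofReal + Complex.I • (M.map Complex.im).map Complex.ofReal = M := by
  ext i j
  simpa [mul_comm] using Complex.re_add_im (M i j)

lemma transpose_map_re_of_star_eq_neg {M : Matrix ι ι ℂ} (hM : star M = -M) :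
    (M.map Complex.re)ᵀ = -M.map Complex.re := by
  ext i j
  simpa using congrArg Complex.re (congrFun₂ hM i j)

lemma isSymm_map_im_of_star_eq_neg {M : Matrix ι ι ℂ} (hM : star M = -M) :
    (M.map Complex.im).IsSymm := by
  ext i j
  simpa using congrArg Complex.im (congrFun₂ hM i j)

lemma eq_map_re_add_smul_one_of_map_im_eq [DecidableEq ι] {M : Matrix ι ι ℂ} {t : ℝ}
    (ht : M.map Complex.im = t • 1) :
    M = (M.map Complex.re).map Complex.ofReal + (t • Complex.I) • (1 : Matrix ι ι ℂ) := by
  conv_lhs => rw [← map_re_add_map_im M, ht]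
  congr 1
  ext i j
  simp only [smul_apply, map_apply, one_apply, smul_eq_mul]
  split_ifs <;> simp [mul_comm]

variable [Fintype ι] [DecidableEq ι] {g : Submodule ℝ (Matrix ι ι ℂ)}

def imagSubmodule (g : Submodule ℝ (Matrix ι ι ℂ)) : Submodule ℝ (Matrix ι ι ℝ) :=
  g.comap (Complex.I • (Complex.ofRealAm.mapMatrix : Matrix ι ι ℝ →ₐ[ℝ] Matrix ι ι ℂ).toLinearMap)

lemma mem_imagSubmodule {S : Matrix ι ι ℝ} :
    S ∈ imagSubmodule g ↔ Complex.I • S.map Complex.ofReal ∈ g := Iff.rfl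

lemma lie_mem_imagSubmodule (hbracket : ∀ X ∈ g, ∀ Y ∈ g, X * Y - Y * X ∈ g)
    (hso : ∀ A : Matrix ι ι ℝ, Aᵀ = -A → A.map Complex.ofReal ∈ g)
    {A : Matrix ι ι ℝ} (hA : Aᵀ = -A) {S : Matrix ι ι ℝ} (hS : S ∈ imagSubmodule g) :
    ⁅A, S⁆ ∈ imagSubmodule g := by
  have map_mul : ∀ X Y : Matrix ι ι ℝ,
      (X * Y).map Complex.ofReal = X.map Complex.ofReal * Y.map Complex.ofReal :=
    fun _ _ => Matrix.map_mul (f := Complex.ofRealHom)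
  have key : Complex.I • ⁅A, S⁆.map Complex.ofReal
      = A.map Complex.ofReal * (Complex.I • S.map Complex.ofReal)
        - (Complex.I • S.map Complex.ofReal) * A.map Complex.ofReal := by
    rw [Ring.lie_def, Matrix.map_sub _ Complex.ofReal_sub, map_mul, map_mul, smul_sub,
      mul_smul_comm, smul_mul_assoc]
  rw [mem_imagSubmodule, key]
  exact hbracket _ (hso A hA) _ hS

lemma isSymm_of_mem_imagSubmodule (hsub : ∀ M ∈ g, star M = -M) {S : Matrix ι ι ℝ}
    (hS : S ∈ imagSubmodule g) : S.IsSymm := by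
  ext i j
  simpa using congrArg Complex.im (congrFun₂ (hsub _ hS) i j)

lemma mem_iff_map_im_mem_imagSubmodule
    (hso : ∀ A : Matrix ι ι ℝ, Aᵀ = -A → A.map Complex.ofReal ∈ g)
    {M : Matrix ι ι ℂ} (hM : star M = -M) : M ∈ g ↔ M.map Complex.im ∈ imagSubmodule g := by
  conv_lhs => rw [← map_re_add_map_im M]
  exact g.add_mem_iff_right (hso _ (transpose_map_re_of_star_eq_neg hM))

end SkewHermitian

end Matrix

theorem intermediate_lie_subalgebra_u_n_general (n : ℕ)
    (g : Submodule ℝ (Matrix (Fin n) (Fin n) ℂ))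
    (hbracket : ∀ X ∈ g, ∀ Y ∈ g, X * Y - Y * X ∈ g)
    (hsub : ∀ M ∈ g, star M = -M)
    (hcontains : ∀ (A : Matrix (Fin n) (Fin n) ℝ) (t : ℝ), Aᵀ = -A →
      A.map Complex.ofReal + (t • Complex.I) • (1 : Matrix (Fin n) (Fin n) ℂ) ∈ g) :
    (g : Set (Matrix (Fin n) (Fin n) ℂ))
        = {M | ∃ (A : Matrix (Fin n) (Fin n) ℝ) (t : ℝ), Aᵀ = -A ∧
            M = A.map Complex.ofReal + (t • Complex.I) • (1 : Matrix (Fin n) (Fin n) ℂ)}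
      ∨ (g : Set (Matrix (Fin n) (Fin n) ℂ)) = {M | star M = -M} := by
  have hso : ∀ A : Matrix (Fin n) (Fin n) ℝ, Aᵀ = -A → A.map Complex.ofReal ∈ g :=
    fun A hA => by simpa using hcontains A 0 hA
  have hone : (1 : Matrix (Fin n) (Fin n) ℝ) ∈ imagSubmodule g := by
    simpa [mem_imagSubmodule] using hcontains 0 1 (by simp)
  have him : ∀ M ∈ g, M.map Complex.im ∈ imagSubmodule g :=
    fun M hM => (mem_iff_map_im_mem_imagSubmodule hso (hsub M hM)).1 hM
  rcases le_span_one_or_forall_isSymm_mem (fun A hA S hS => lie_mem_imagSubmodule hbracket hso hA hS)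
    hone (fun S hS => isSymm_of_mem_imagSubmodule hsub hS) with hscalar | hsymm
  · refine Or.inl (Set.ext fun M => ⟨fun hM => ?_, fun ⟨A, t, hA, hMA⟩ => hMA ▸ hcontains A t hA⟩)
    obtain ⟨t, ht⟩ := Submodule.mem_span_singleton.1 (hscalar (him M hM))
    exact ⟨_, t, transpose_map_re_of_star_eq_neg (hsub M hM),
      eq_map_re_add_smul_one_of_map_im_eq ht.symm⟩
  · exact Or.inr (Set.ext fun M => ⟨hsub M, fun hM =>
      (mem_iff_map_im_mem_imagSubmodule hso hM).2 (hsymm _ (isSymm_map_im_of_star_eq_neg hM))⟩)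

/-- For `n ≥ 2`, any real Lie subalgebra `𝔤` with
`𝔰𝔬(n) ⊕ iℝ·1 ⊆ 𝔤 ⊆ 𝔲(n)` equals `𝔰𝔬(n) ⊕ iℝ·1` or `𝔲(n)`.  Here `𝔲(n)` is the set of
skew-Hermitian matrices and `𝔰𝔬(n) ⊕ iℝ·1` is the set of matrices `A + it·1` with `A` real
skew-symmetric, `t ∈ ℝ`. -/
theorem intermediate_lie_subalgebra_u_n (n : ℕ) (hn : 2 ≤ n)
    (g : Submodule ℝ (Matrix (Fin n) (Fin n) ℂ))
    (hbracket : ∀ X ∈ g, ∀ Y ∈ g, X * Y - Y * X ∈ g)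
    (hsub : ∀ M ∈ g, star M = -M)
    (hcontains : ∀ (A : Matrix (Fin n) (Fin n) ℝ) (t : ℝ), Aᵀ = -A →
      A.map Complex.ofReal + (t • Complex.I) • (1 : Matrix (Fin n) (Fin n) ℂ) ∈ g) :
    (g : Set (Matrix (Fin n) (Fin n) ℂ))
        = {M | ∃ (A : Matrix (Fin n) (Fin n) ℝ) (t : ℝ), Aᵀ = -A ∧
            M = A.map Complex.ofReal + (t • Complex.I) • (1 : Matrix (Fin n) (Fin n) ℂ)}
      ∨ (g : Set (Matrix (Fin n) (Fin n) ℂ)) = {M | star M = -M} :=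
  intermediate_lie_subalgebra_u_n_general n g hbracket hsub hcontains
end

section
/- Let θ : A → A' be a morphism of Hopf algebras where A and A' are cosemisimple with Haar integrals h_A and h_{A'}. Then θ is injective if and only if h_{A'} ∘ θ = h_A. -/
open TensorProduct

/-- A Haar integral on a Hopf algebra `A` over `k`: a linear functional `h` with `h(1) = 1`
satisfying the left and right invariance conditions `(h ⊗ id)Δ(a) = h(a)·1 = (id ⊗ h)Δ(a)`. -/
def IsHaarIntegral (k : Type*) {A : Type*} [CommRing k] [Ring A] [HopfAlgebra k A]
    (h : A →ₗ[k] k) : Prop :=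
  h 1 = 1 ∧ ∀ a : A,
    (TensorProduct.lid k A) ((TensorProduct.map h LinearMap.id) (Coalgebra.comul a))
      = h a • (1 : A) ∧
    (TensorProduct.rid k A) ((TensorProduct.map LinearMap.id h) (Coalgebra.comul a))
      = h a • (1 : A)

/-- A submodule `D ⊆ A` is a subcoalgebra if `Δ(D) ⊆ D ⊗ D` (inside `A ⊗ A`). -/
def IsSubcoalgebra (k : Type*) {A : Type*} [CommRing k] [Ring A] [HopfAlgebra k A]
    (D : Submodule k A) : Prop :=
  ∀ a ∈ D, Coalgebra.comul (R := k) a ∈ LinearMap.range (TensorProduct.map D.subtype D.subtype)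

/-- A simple subcoalgebra: a nonzero subcoalgebra with no nontrivial proper subcoalgebras. -/
def IsSimpleSubcoalgebra (k : Type*) {A : Type*} [CommRing k] [Ring A] [HopfAlgebra k A]
    (D : Submodule k A) : Prop :=
  IsSubcoalgebra k D ∧ D ≠ ⊥ ∧
    ∀ E : Submodule k A, E ≤ D → IsSubcoalgebra k E → E = ⊥ ∨ E = D

/-- `A` is cosemisimple if it is the sum of its simple subcoalgebras. -/
def IsCosemisimple (k A : Type*) [CommRing k] [Ring A] [HopfAlgebra k A] : Prop :=
  sSup {D : Submodule k A | IsSimpleSubcoalgebra k D} = ⊤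


/-!
A normalized left-invariant functional `h` and a normalized right-invariant one `φ` coincide,
since `(h ⊗ φ)(Δa)` equals both `φ(a)` and `h(a)`. If `θ` is injective, `h_{A'} ∘ θ` is
normalized and right-invariant, so it is `h_A`.

Conversely, if `h_{A'} ∘ θ = h_A` then `ker θ` lies in the left ideal `{x | h(Ax) = 0}`, and
this ideal vanishes for every right-invariant `h` with `h(1) ≠ 0`. Indeed, the identity
`∑ x₁ h(b x₂) = ∑ S(b₁) h(b₂ x)` shows that the right legs of `Δx` stay in the ideal; then
`ε(x) 1 = ∑ S(x₁) x₂` lies in it as well, forcing `ε(x) = 0`, and finally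
`f(x) = ε(∑ f(x₁) x₂) = 0` for every functional `f`.
-/

open Coalgebra HopfAlgebra LinearMap

section

variable {k : Type*} [CommSemiring k]

lemma apply_lid_rTensor_eq_apply_rid_lTensor {M N : Type*} [AddCommMonoid M] [Module k M]
    [AddCommMonoid N] [Module k N] (f : M →ₗ[k] k) (g : N →ₗ[k] k) (t : M ⊗[k] N) :
    g (TensorProduct.lid k N (f.rTensor N t)) = f (TensorProduct.rid k M (g.lTensor M t)) := by
  induction t with
  | zero => simp
  | add t u ht hu => simp only [map_add, ht, hu]
  | tmul m n => simp [mul_comm]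

def kerLeftIdeal {A : Type*} [Semiring A] [Module k A] (h : A →ₗ[k] k) : Submodule A A where
  carrier := {x | ∀ b : A, h (b * x) = 0}
  add_mem' hx hy b := by simp [mul_add, hx b, hy b]
  zero_mem' b := by simp
  smul_mem' c x hx b := by simpa [mul_assoc] using hx (b * c)

end

section

variable {k A : Type*} [CommSemiring k] [Semiring A] [Bialgebra k A]

def IsLeftInvariant (h : A →ₗ[k] k) : Prop :=
  ∀ a : A, TensorProduct.lid k A (h.rTensor A (comul a)) = h a • (1 : A)

def IsRightInvariant (h : A →ₗ[k] k) : Prop :=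
  ∀ a : A, TensorProduct.rid k A (h.lTensor A (comul a)) = h a • (1 : A)

lemma eq_of_isLeftInvariant_of_isRightInvariant {h φ : A →ₗ[k] k} (hh : IsLeftInvariant h)
    (hh₁ : h 1 = 1) (hφ : IsRightInvariant φ) (hφ₁ : φ 1 = 1) : φ = h := by
  ext a
  simpa [hh a, hφ a, hh₁, hφ₁] using
    (apply_lid_rTensor_eq_apply_rid_lTensor h φ (comul a)).symm

lemma IsRightInvariant.comp_of_injective {A' : Type*} [Semiring A'] [Bialgebra k A']
    {h : A' →ₗ[k] k} (hh : IsRightInvariant h) {θ : A →ₐc[k] A'} (hθ : Function.Injective θ) :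
    IsRightInvariant (h ∘ₗ θ.toLinearMap) := by
  intro a
  apply hθ
  have hθ_rid (t : A ⊗[k] A) : θ (TensorProduct.rid k A ((h ∘ₗ θ.toLinearMap).lTensor A t)) =
      TensorProduct.rid k A' (h.lTensor A' (TensorProduct.map θ.toLinearMap θ.toLinearMap t)) := by
    induction t with
    | zero => simp
    | add t u ht hu => simp only [map_add, ht, hu]
    | tmul x y => exact map_smul θ _ x
  have hθ_comul : TensorProduct.map θ.toLinearMap θ.toLinearMap (comul a) = comul (θ a) :=
    CoalgHomClass.map_comp_comul_apply θ a
  rw [hθ_rid, hθ_comul, hh, map_smul, map_one]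
  rfl

end

namespace IsHaarIntegral

variable {k A : Type*} [CommRing k] [Ring A] [HopfAlgebra k A] {h : A →ₗ[k] k}

lemma isLeftInvariant (hh : IsHaarIntegral k h) : IsLeftInvariant h := fun a => (hh.2 a).1

lemma isRightInvariant (hh : IsHaarIntegral k h) : IsRightInvariant h := fun a => (hh.2 a).2

end IsHaarIntegral

section

variable {k A : Type*} [CommSemiring k] [Semiring A] [HopfAlgebra k A]

lemma one_tmul_eq_sum_antipode_tmul_one_mul_comul (b : A) :
    (1 : A) ⊗ₜ[k] b = ∑ i ∈ (ℛ k b).index,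
      (antipode k ((ℛ k b).left i) ⊗ₜ[k] (1 : A)) * comul ((ℛ k b).right i) := by
  set 𝓡 := ℛ k b
  -- `Φ (u ⊗ v ⊗ w) = S(u) v ⊗ w`, applied to both sides of coassociativity
  let Φ : A ⊗[k] (A ⊗[k] A) →ₗ[k] A ⊗[k] A :=
    (mul' k A ∘ₗ (antipode k).rTensor A).rTensor A ∘ₗ
      (TensorProduct.assoc k A A A).symm.toLinearMap
  have hcoassoc := congrArg Φ
    (sum_tmul_tmul_eq 𝓡 (fun i => ℛ k (𝓡.left i)) (fun i => ℛ k (𝓡.right i)))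
  simp only [map_sum, Φ, comp_apply, LinearEquiv.coe_coe, TensorProduct.assoc_symm_tmul,
    rTensor_tmul, mul'_apply] at hcoassoc
  simp_rw [← TensorProduct.sum_tmul, sum_antipode_mul_eq_smul] at hcoassoc
  calc (1 : A) ⊗ₜ[k] b
        = ∑ i ∈ 𝓡.index, (counit (R := k) (𝓡.left i) • (1 : A)) ⊗ₜ[k] 𝓡.right i := by
        simp_rw [TensorProduct.smul_tmul, ← TensorProduct.tmul_sum, sum_counit_smul]
    _ = _ := hcoassoc
    _ = _ := by
        simp_rw [← (ℛ k _).eq, Finset.mul_sum, Algebra.TensorProduct.tmul_mul_tmul, one_mul]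

lemma IsRightInvariant.rid_lTensor_mulLeft_comul {h : A →ₗ[k] k} (hh : IsRightInvariant h)
    (b x : A) :
    TensorProduct.rid k A ((h ∘ₗ mulLeft k b).lTensor A (comul x)) =
      TensorProduct.rid k A (TensorProduct.map (antipode k) (h ∘ₗ mulRight k x) (comul b)) := by
  let F : A ⊗[k] A →ₗ[k] A :=
    (TensorProduct.rid k A).toLinearMap ∘ₗ h.lTensor A ∘ₗ mulRight k (comul x)
  have hF_tmul_one_mul (u : A) (t : A ⊗[k] A) : F ((u ⊗ₜ[k] 1) * t) = u * F t := by
    suffices ∀ s : A ⊗[k] A, TensorProduct.rid k A (h.lTensor A ((u ⊗ₜ[k] 1) * s)) =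
        u * TensorProduct.rid k A (h.lTensor A s) by simp [F, mul_assoc, this]
    intro s
    induction s with
    | zero => simp
    | add s s' hs hs' => simp only [mul_add, map_add, hs, hs']
    | tmul p q => simp [Algebra.TensorProduct.tmul_mul_tmul]
  have hF_comul (c : A) : F (comul c) = h (c * x) • (1 : A) := by
    simp [F, ← Bialgebra.comul_mul, hh (c * x)]
  have hF_one_tmul : TensorProduct.rid k A ((h ∘ₗ mulLeft k b).lTensor A (comul x)) =
      F (1 ⊗ₜ[k] b) := by
    suffices ∀ s : A ⊗[k] A, TensorProduct.rid k A ((h ∘ₗ mulLeft k b).lTensor A s) =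
        TensorProduct.rid k A (h.lTensor A ((1 ⊗ₜ[k] b) * s)) from this (comul x)
    intro s
    induction s with
    | zero => simp
    | add s s' hs hs' => simp only [mul_add, map_add, hs, hs']
    | tmul p q => simp [Algebra.TensorProduct.tmul_mul_tmul]
  rw [hF_one_tmul, one_tmul_eq_sum_antipode_tmul_one_mul_comul, map_sum, ← (ℛ k b).eq, map_sum,
    map_sum]
  simp [hF_tmul_one_mul, hF_comul]

lemma IsRightInvariant.lid_rTensor_comul_mem {h : A →ₗ[k] k} (hh : IsRightInvariant h) {x : A}
    (hx : x ∈ kerLeftIdeal h) (f : Module.Dual k A) :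
    TensorProduct.lid k A (f.rTensor A (comul x)) ∈ kerLeftIdeal h := by
  intro b
  have hmul : h ∘ₗ mulRight k x = 0 := LinearMap.ext hx
  simpa [hh.rid_lTensor_mulLeft_comul, hmul] using
    apply_lid_rTensor_eq_apply_rid_lTensor f (h ∘ₗ mulLeft k b) (comul x)

end

section

variable {k A : Type*} [Field k] [Ring A] [HopfAlgebra k A] {h : A →ₗ[k] k}

lemma IsRightInvariant.counit_eq_zero_of_mem (hh : IsRightInvariant h) (hh₁ : h 1 ≠ 0) {y : A}
    (hy : y ∈ kerLeftIdeal h) : counit (R := k) y = 0 := by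
  classical
  let ℬ := Module.Basis.ofVectorSpace k A
  let c := TensorProduct.equivFinsuppOfBasisLeft ℬ (comul (R := k) y)
  have hc : ∀ i, c i ∈ kerLeftIdeal h := fun i => by
    rw [TensorProduct.equivFinsuppOfBasisLeft_apply]
    exact hh.lid_rTensor_comul_mem hy _
  have hcomul : comul (R := k) y = c.sum fun i n => ℬ i ⊗ₜ[k] n := by
    rw [← TensorProduct.equivFinsuppOfBasisLeft_symm_apply, LinearEquiv.symm_apply_apply]
  have hmem : counit (R := k) y • (1 : A) ∈ kerLeftIdeal h := by
    rw [← Algebra.algebraMap_eq_smul_one, ← mul_antipode_rTensor_comul_apply, hcomul]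
    simp only [Finsupp.sum, map_sum, rTensor_tmul, mul'_apply]
    exact Submodule.sum_mem _ fun i _ => Submodule.smul_mem _ _ (hc i)
  simpa [hh₁] using hmem 1

lemma IsRightInvariant.kerLeftIdeal_eq_bot (hh : IsRightInvariant h) (hh₁ : h 1 ≠ 0) :
    kerLeftIdeal h = ⊥ := by
  refine eq_bot_iff.2 fun x hx => (Submodule.mem_bot A).2 ?_
  refine (Module.forall_dual_apply_eq_zero_iff k x).1 fun f => ?_
  have hfx : counit (TensorProduct.lid k A (f.rTensor A (comul x))) = f x := by
    simpa using apply_lid_rTensor_eq_apply_rid_lTensor f counit (comul (R := k) x)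
  rw [← hfx]
  exact hh.counit_eq_zero_of_mem hh₁ (hh.lid_rTensor_comul_mem hx f)

end

theorem injective_iff_haar_comp_general {k A A' : Type*} [Field k] [Ring A] [Ring A']
    [HopfAlgebra k A] [HopfAlgebra k A']
    (hA : A →ₗ[k] k) (hA' : A' →ₗ[k] k)
    (hHA : IsHaarIntegral k hA) (hHA' : IsHaarIntegral k hA')
    (θ : A →ₐc[k] A') :
    Function.Injective θ ↔ hA'.comp θ.toLinearMap = hA := by
  constructor
  · intro hθ
    have hθ₁ : (hA'.comp θ.toLinearMap) 1 = 1 := by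
      show hA' (θ 1) = 1
      rw [map_one, hHA'.1]
    exact eq_of_isLeftInvariant_of_isRightInvariant hHA.isLeftInvariant hHA.1
      (hHA'.isRightInvariant.comp_of_injective hθ) hθ₁
  · intro hcomp
    refine (injective_iff_map_eq_zero θ).2 fun x hx => ?_
    have hx_mem : x ∈ kerLeftIdeal hA := fun b => by
      rw [← hcomp]
      show hA' (θ (b * x)) = 0
      rw [map_mul, hx, mul_zero, map_zero]
    rwa [hHA.isRightInvariant.kerLeftIdeal_eq_bot (hHA.1 ▸ one_ne_zero), Submodule.mem_bot]
      at hx_mem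

/-- A morphism `θ : A → A'` of cosemisimple Hopf algebras, with Haar integrals
`h_A` and `h_{A'}`, is injective if and only if `h_{A'} ∘ θ = h_A`. -/
theorem injective_iff_haar_comp {k A A' : Type*} [Field k] [Ring A] [Ring A']
    [HopfAlgebra k A] [HopfAlgebra k A']
    (hcs : IsCosemisimple k A) (hcs' : IsCosemisimple k A')
    (hA : A →ₗ[k] k) (hA' : A' →ₗ[k] k)
    (hHA : IsHaarIntegral k hA) (hHA' : IsHaarIntegral k hA')
    (θ : A →ₐc[k] A') :
    Function.Injective θ ↔ hA'.comp θ.toLinearMap = hA :=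
  injective_iff_haar_comp_general hA hA' hHA hHA' θ
end

section
/- Short five lemma for cosemisimple Hopf algebras: given a commutative diagram of cosemisimple Hopf algebra maps with rows k → B →i A →π L → k and k → B →i' A' →π' L → k, where both rows are pre-exact (i, i' injective, π, π' surjective, i(B) = A^{co π} and i'(B) = A'^{co π'}), the identity on B and L, and a middle map θ : A → A' with θ∘i = i' and π'∘θ = π, the map θ is injective. -/
open TensorProduct

/-- The coinvariant subalgebra `A^{co π} = {a ∈ A : (id ⊗ π)Δ(a) = a ⊗ 1}` of a Hopf algebra
map `π : A → L`. -/
def coinvariants {k A L : Type*} [CommRing k] [Ring A] [Ring L]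
    [HopfAlgebra k A] [HopfAlgebra k L] (π : A →ₐc[k] L) : Set A :=
  {a : A | (TensorProduct.map LinearMap.id π.toLinearMap) (Coalgebra.comul a) = a ⊗ₜ[k] 1}

/-!
Cosemisimplicity gives normalized integrals `μ` on `A` and `λ` on `L`: a subcoalgebra `F` maximal
among those meeting `k ∙ 1` trivially is a complement of `k ∙ 1` (every simple subcoalgebra lies
in `k ∙ 1 ⊔ F`), and the functional that is `ε` on `k ∙ 1` and `0` on `F` is a two-sided integral.

The expectation `E = (id ⊗ λ π) Δ` takes values in `A^{co π} = i(B)`, satisfies `θ E = E' θ` and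
preserves `μ`. If `θ a = 0`, write `E(a x) = i b`; then `i' b = θ (E (a x)) = E' (θ a θ x) = 0`,
so `b = 0` and `μ (a x) = μ (E (a x)) = 0` for all `x`. Hence `a = 0`, because a normalized right
integral is faithful: the right ideal `N = {y | ∀ x, μ (y x) = 0}` satisfies `Δ N ⊆ N ⊗ A` by the
identity `μ (a₍₁₎ x) a₍₂₎ = μ (a x₍₁₎) S (x₍₂₎)`, and such a right ideal not containing `1` is zero.
-/

namespace TensorProduct

section Semiring

variable {R M N P : Type*} [CommSemiring R] [AddCommMonoid M] [Module R M]
  [AddCommMonoid N] [Module R N] [AddCommMonoid P] [Module R P]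

def sliceRight (f : N →ₗ[R] R) : M ⊗[R] N →ₗ[R] M :=
  (TensorProduct.rid R M).toLinearMap ∘ₗ f.lTensor M

def sliceLeft (f : M →ₗ[R] R) : M ⊗[R] N →ₗ[R] N :=
  (TensorProduct.lid R N).toLinearMap ∘ₗ f.rTensor N

@[simp] lemma sliceRight_tmul (f : N →ₗ[R] R) (x : M) (y : N) :
    sliceRight f (x ⊗ₜ[R] y) = f y • x := by
  simp [sliceRight]

@[simp] lemma sliceLeft_tmul (f : M →ₗ[R] R) (x : M) (y : N) :
    sliceLeft f (x ⊗ₜ[R] y) = f x • y := by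
  simp [sliceLeft]

@[simp] lemma sliceRight_zero : sliceRight (M := M) (0 : N →ₗ[R] R) = 0 := by
  ext; simp

@[simp] lemma sliceLeft_zero : sliceLeft (N := N) (0 : M →ₗ[R] R) = 0 := by
  ext; simp

lemma sliceRight_lTensor (f : P →ₗ[R] R) (g : N →ₗ[R] P) (u : M ⊗[R] N) :
    sliceRight f (g.lTensor M u) = sliceRight (f ∘ₗ g) u := by
  induction u using TensorProduct.induction_on <;> simp_all

lemma sliceLeft_rTensor (f : P →ₗ[R] R) (g : M →ₗ[R] P) (u : M ⊗[R] N) :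
    sliceLeft f (g.rTensor N u) = sliceLeft (f ∘ₗ g) u := by
  induction u using TensorProduct.induction_on <;> simp_all

lemma map_sliceRight (f : N →ₗ[R] R) (g : M →ₗ[R] P) (u : M ⊗[R] N) :
    g (sliceRight f u) = sliceRight f (g.rTensor N u) := by
  induction u using TensorProduct.induction_on <;> simp_all

lemma map_sliceLeft (f : M →ₗ[R] R) (g : N →ₗ[R] P) (u : M ⊗[R] N) :
    g (sliceLeft f u) = sliceLeft f (g.lTensor M u) := by
  induction u using TensorProduct.induction_on <;> simp_all

lemma apply_sliceRight (f : M →ₗ[R] R) (g : N →ₗ[R] R) (u : M ⊗[R] N) :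
    f (sliceRight g u) = g (sliceLeft f u) := by
  induction u using TensorProduct.induction_on <;> simp_all [mul_comm]

lemma sliceRight_assoc_symm (f : P →ₗ[R] R) (u : M ⊗[R] (N ⊗[R] P)) :
    sliceRight f ((TensorProduct.assoc R M N P).symm u) = (sliceRight f).lTensor M u := by
  induction u using TensorProduct.induction_on with
  | zero => simp
  | tmul x w => induction w using TensorProduct.induction_on <;> simp_all [tmul_add, tmul_smul]
  | add u v hu hv => simp_all

lemma lTensor_algebraLinearMap_comp {L : Type*} [Semiring L] [Algebra R L] (f : N →ₗ[R] R)
    (u : M ⊗[R] N) :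
    (Algebra.linearMap R L ∘ₗ f).lTensor M u = sliceRight f u ⊗ₜ[R] (1 : L) := by
  induction u using TensorProduct.induction_on with
  | zero => simp
  | tmul x y => simp [Algebra.algebraMap_eq_smul_one, tmul_smul, smul_tmul']
  | add u v hu hv => simp_all [add_tmul]

lemma sliceLeft_mul_tmul {A B : Type*} [Semiring A] [Algebra R A] [Semiring B] [Algebra R B]
    (f : A →ₗ[R] R) (t : A ⊗[R] B) (y : A) (z : B) :
    sliceLeft f (t * (y ⊗ₜ z)) = sliceLeft (f ∘ₗ LinearMap.mulRight R y) t * z := by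
  induction t using TensorProduct.induction_on with
  | zero => simp
  | tmul a b => simp
  | add t t' ht ht' => simp_all [add_mul]

lemma range_map_subtype_mono {D D' : Submodule R M} {E E' : Submodule R N} (hD : D ≤ D')
    (hE : E ≤ E') :
    LinearMap.range (map D.subtype E.subtype) ≤ LinearMap.range (map D'.subtype E'.subtype) := by
  rw [← Submodule.subtype_comp_inclusion D D' hD, ← Submodule.subtype_comp_inclusion E E' hE,
    map_comp]
  exact LinearMap.range_comp_le_range _ _

end Semiring

section Field

variable {k M N : Type*} [Field k] [AddCommGroup M] [Module k M] [AddCommGroup N] [Module k N]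

lemma mem_range_rTensor_iff_sliceRight (D : Submodule k M) (u : M ⊗[k] N) :
    u ∈ LinearMap.range (D.subtype.rTensor N) ↔ ∀ f : N →ₗ[k] k, sliceRight f u ∈ D := by
  classical
  refine ⟨?_, fun h => ?_⟩
  · rintro ⟨w, rfl⟩ f
    rw [← map_sliceRight]
    exact (sliceRight f w).2
  · let b := Module.Basis.ofVectorSpace k N
    rw [← (equivFinsuppOfBasisRight b).symm_apply_apply u, equivFinsuppOfBasisRight_symm_apply]
    refine Submodule.finsuppSum_mem _ _ _ _ fun i _ => ⟨⟨_, h (b.coord i)⟩ ⊗ₜ b i, ?_⟩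
    simp [equivFinsuppOfBasisRight_apply, sliceRight]

lemma mem_range_lTensor_iff_sliceLeft (E : Submodule k N) (u : M ⊗[k] N) :
    u ∈ LinearMap.range (E.subtype.lTensor M) ↔ ∀ f : M →ₗ[k] k, sliceLeft f u ∈ E := by
  classical
  refine ⟨?_, fun h => ?_⟩
  · rintro ⟨w, rfl⟩ f
    rw [← map_sliceLeft]
    exact (sliceLeft f w).2
  · let b := Module.Basis.ofVectorSpace k M
    rw [← (equivFinsuppOfBasisLeft b).symm_apply_apply u, equivFinsuppOfBasisLeft_symm_apply]
    refine Submodule.finsuppSum_mem _ _ _ _ fun i _ => ⟨b i ⊗ₜ ⟨_, h (b.coord i)⟩, ?_⟩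
    simp [equivFinsuppOfBasisLeft_apply, sliceLeft]

lemma range_rTensor_inf (D D' : Submodule k M) :
    LinearMap.range ((D ⊓ D').subtype.rTensor N)
      = LinearMap.range (D.subtype.rTensor N) ⊓ LinearMap.range (D'.subtype.rTensor N) := by
  ext u
  simp only [Submodule.mem_inf, mem_range_rTensor_iff_sliceRight, forall_and]

lemma range_lTensor_inf (E E' : Submodule k N) :
    LinearMap.range ((E ⊓ E').subtype.lTensor M)
      = LinearMap.range (E.subtype.lTensor M) ⊓ LinearMap.range (E'.subtype.lTensor M) := by
  ext u
  simp only [Submodule.mem_inf, mem_range_lTensor_iff_sliceLeft, forall_and]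

lemma range_map_subtype (D : Submodule k M) (E : Submodule k N) :
    LinearMap.range (map D.subtype E.subtype)
      = LinearMap.range (D.subtype.rTensor N) ⊓ LinearMap.range (E.subtype.lTensor M) := by
  refine le_antisymm (le_inf ?_ ?_) ?_
  · rw [← LinearMap.rTensor_comp_lTensor]
    exact LinearMap.range_comp_le_range _ _
  · rw [← LinearMap.lTensor_comp_rTensor]
    exact LinearMap.range_comp_le_range _ _
  · rintro u ⟨⟨v, rfl⟩, ⟨w, hw⟩⟩
    obtain ⟨q, hq⟩ := D.exists_isCompl
    let p := D.projectionOnto q hq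
    have hv : p.rTensor N (D.subtype.rTensor N v) = v := by
      rw [← LinearMap.rTensor_comp_apply, Submodule.projectionOnto_comp_subtype,
        LinearMap.rTensor_id_apply]
    refine ⟨p.rTensor E w, ?_⟩
    rw [← LinearMap.comp_apply, LinearMap.map_comp_rTensor, ← LinearMap.rTensor_comp_lTensor,
      LinearMap.comp_apply, hw, LinearMap.rTensor_comp_apply, hv]

end Field

end TensorProduct

section Subcoalgebra

variable {R A : Type*} [CommRing R] [Ring A] [HopfAlgebra R A]

lemma isSubcoalgebra_bot : IsSubcoalgebra R (⊥ : Submodule R A) := by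
  rintro a rfl
  simp

lemma isSubcoalgebra_span_one : IsSubcoalgebra R (R ∙ (1 : A)) := by
  intro a ha
  obtain ⟨c, rfl⟩ := Submodule.mem_span_singleton.mp ha
  let one : R ∙ (1 : A) := ⟨1, Submodule.mem_span_singleton_self 1⟩
  exact ⟨c • (one ⊗ₜ one), by simp [one, Algebra.TensorProduct.one_def]⟩

lemma IsSubcoalgebra.sup {D E : Submodule R A} (hD : IsSubcoalgebra R D)
    (hE : IsSubcoalgebra R E) : IsSubcoalgebra R (D ⊔ E) := by
  intro a ha
  obtain ⟨d, hd, e, he, rfl⟩ := Submodule.mem_sup.mp ha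
  rw [map_add]
  exact add_mem (range_map_subtype_mono le_sup_left le_sup_left (hD d hd))
    (range_map_subtype_mono le_sup_right le_sup_right (hE e he))

lemma isSubcoalgebra_sSup_of_directed {S : Set (Submodule R A)} (hne : S.Nonempty)
    (hdir : DirectedOn (· ≤ ·) S) (hS : ∀ D ∈ S, IsSubcoalgebra R D) :
    IsSubcoalgebra R (sSup S) := by
  intro a ha
  obtain ⟨D, hD, haD⟩ := (Submodule.mem_sSup_of_directed hne hdir).mp ha
  exact range_map_subtype_mono (le_sSup hD) (le_sSup hD) (hS D hD a haD)

end Subcoalgebra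

section Integral

variable {R A : Type*} [CommSemiring R] [Semiring A] [Bialgebra R A]

def IsLeftIntegral (lam : A →ₗ[R] R) : Prop :=
  ∀ a : A, sliceRight lam (Coalgebra.comul a) = lam a • 1

def IsRightIntegral (lam : A →ₗ[R] R) : Prop :=
  ∀ a : A, sliceLeft lam (Coalgebra.comul a) = lam a • 1

end Integral

section Cosemisimple

variable {k A : Type*} [Field k] [Ring A] [HopfAlgebra k A]

lemma isSubcoalgebra_iff_rTensor_lTensor (D : Submodule k A) :
    IsSubcoalgebra k D ↔ ∀ a ∈ D, Coalgebra.comul a ∈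
      LinearMap.range (D.subtype.rTensor A) ⊓ LinearMap.range (D.subtype.lTensor A) := by
  simp only [IsSubcoalgebra, range_map_subtype]

lemma IsSubcoalgebra.inf {D E : Submodule k A} (hD : IsSubcoalgebra k D)
    (hE : IsSubcoalgebra k E) : IsSubcoalgebra k (D ⊓ E) := by
  rw [isSubcoalgebra_iff_rTensor_lTensor] at hD hE ⊢
  rintro a ⟨haD, haE⟩
  obtain ⟨hDr, hDl⟩ := hD a haD
  obtain ⟨hEr, hEl⟩ := hE a haE
  rw [range_rTensor_inf, range_lTensor_inf]
  exact ⟨⟨hDr, hEr⟩, hDl, hEl⟩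

lemma IsCosemisimple.exists_isCompl_span_one (hcs : IsCosemisimple k A) :
    ∃ F : Submodule k A, IsSubcoalgebra k F ∧ IsCompl (k ∙ (1 : A)) F := by
  let S := {F : Submodule k A | IsSubcoalgebra k F ∧ Disjoint (k ∙ (1 : A)) F}
  have hchain : ∀ c ⊆ S, IsChain (· ≤ ·) c → ∀ D ∈ c, ∃ ub ∈ S, ∀ E ∈ c, E ≤ ub :=
    fun c hcS hc D hD => ⟨sSup c, ⟨isSubcoalgebra_sSup_of_directed ⟨D, hD⟩ hc.directedOn
      fun E hE => (hcS hE).1, hc.directedOn.disjoint_sSup_right.2 fun E hE => (hcS hE).2⟩,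
      fun E => le_sSup⟩
  obtain ⟨F, -, ⟨hF, hdisj⟩, hmax⟩ :=
    zorn_le_nonempty₀ S hchain ⊥ ⟨isSubcoalgebra_bot, disjoint_bot_right⟩
  refine ⟨F, hF, hdisj, ?_⟩
  rw [codisjoint_iff, eq_top_iff, ← hcs]
  refine sSup_le fun D ⟨hD, _, hDmin⟩ => ?_
  rcases hDmin _ inf_le_left (hD.inf (isSubcoalgebra_span_one.sup hF)) with h | h
  · -- `D` meets `k ∙ 1 ⊔ F` trivially, so `F ⊔ D ∈ S` and maximality gives `D ≤ F`
    have hFD : F ⊔ D ∈ S := ⟨hF.sup hD,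
      hdisj.disjoint_sup_right_of_disjoint_sup_left (disjoint_iff.2 (inf_comm D _ ▸ h))⟩
    exact le_sup_right.trans ((hmax hFD le_sup_left).trans le_sup_right)
  · exact h ▸ inf_le_right

lemma IsCosemisimple.exists_integral (hcs : IsCosemisimple k A) :
    ∃ lam : A →ₗ[k] k, lam 1 = 1 ∧ IsLeftIntegral lam ∧ IsRightIntegral lam := by
  obtain ⟨F, hF, hc⟩ := hcs.exists_isCompl_span_one
  let lam := LinearMap.ofIsCompl hc (Coalgebra.counit ∘ₗ (k ∙ (1 : A)).subtype) 0
  have lam_one : lam 1 = 1 := by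
    simpa using LinearMap.ofIsCompl_apply_left hc (φ := Coalgebra.counit ∘ₗ (k ∙ (1 : A)).subtype)
      (ψ := 0) ⟨1, Submodule.mem_span_singleton_self 1⟩
  have lam_F (z : A) (hz : z ∈ F) : lam z = 0 := LinearMap.ofIsCompl_apply_right hc ⟨z, hz⟩
  have lam_comp_F : lam ∘ₗ F.subtype = 0 := LinearMap.ext fun z => lam_F z z.2
  have comul_one : Coalgebra.comul (R := k) (1 : A) = 1 ⊗ₜ 1 := by
    simp [Algebra.TensorProduct.one_def]
  have on_span_one {f g : A →ₗ[k] A} (h : f 1 = g 1) : Set.EqOn f g (k ∙ (1 : A)) := by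
    intro x hx
    obtain ⟨c, rfl⟩ := Submodule.mem_span_singleton.mp hx
    simp [h]
  refine ⟨lam, lam_one, fun a => ?_, fun a => ?_⟩
  · refine congr($(LinearMap.ext_on_codisjoint (f := sliceRight lam ∘ₗ Coalgebra.comul)
      (g := lam.smulRight 1) hc.2 (on_span_one (by simp [comul_one, lam_one])) ?_) a)
    intro z hz
    obtain ⟨w, hw⟩ := ((isSubcoalgebra_iff_rTensor_lTensor F).1 hF z hz).2
    simp [← hw, sliceRight_lTensor, lam_comp_F, lam_F z hz]
  · refine congr($(LinearMap.ext_on_codisjoint (f := sliceLeft lam ∘ₗ Coalgebra.comul)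
      (g := lam.smulRight 1) hc.2 (on_span_one (by simp [comul_one, lam_one])) ?_) a)
    intro z hz
    obtain ⟨w, hw⟩ := ((isSubcoalgebra_iff_rTensor_lTensor F).1 hF z hz).1
    simp [← hw, sliceLeft_rTensor, lam_comp_F, lam_F z hz]

end Cosemisimple

section Faithful

open Coalgebra WithConv

lemma IsRightIntegral.sliceLeft_comul_mulRight {R A : Type*} [CommSemiring R] [Semiring A]
    [HopfAlgebra R A] {lam : A →ₗ[R] R} (hlam : IsRightIntegral lam) (a x : A) :
    sliceLeft (lam ∘ₗ LinearMap.mulRight R x) (comul a)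
      = sliceLeft (lam ∘ₗ LinearMap.mulLeft R a) ((HopfAlgebra.antipode R).lTensor A (comul x)) := by
  -- `F x = λ(a₍₁₎ x) a₍₂₎` satisfies `F ⋆ id = η λ(a ·)` in the convolution algebra, and `S` is
  -- the convolution inverse of `id`
  let F : A →ₗ[R] A :=
    sliceLeft lam ∘ₗ LinearMap.mulLeft R (comul a) ∘ₗ (TensorProduct.mk R A A).flip 1
  let G : A →ₗ[R] A := Algebra.linearMap R A ∘ₗ lam ∘ₗ LinearMap.mulLeft R a
  have hF (t : A ⊗[R] A) :
      LinearMap.mul' R A (map F LinearMap.id t) = sliceLeft lam (comul a * t) := by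
    induction t using TensorProduct.induction_on with
    | zero => simp
    | tmul y z => simp [F, sliceLeft_mul_tmul]
    | add t t' ht ht' => simp_all [mul_add]
  have hFid : toConv F * toConv LinearMap.id = toConv G := by
    ext x
    simp [hF, G, ← Bialgebra.comul_mul, hlam (a * x), Algebra.algebraMap_eq_smul_one]
  have hG (t : A ⊗[R] A) : LinearMap.mul' R A (map G (HopfAlgebra.antipode R) t)
      = sliceLeft (lam ∘ₗ LinearMap.mulLeft R a) ((HopfAlgebra.antipode R).lTensor A t) := by
    induction t using TensorProduct.induction_on with
    | zero => simp
    | tmul y z => simp [G, Algebra.smul_def]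
    | add t t' ht ht' => simp_all
  have hFG : toConv F = toConv G * toConv (HopfAlgebra.antipode R) := by
    rw [← hFid, mul_assoc, LinearMap.id_mul_antipode, mul_one]
  simpa [F, hG, sliceLeft_mul_tmul] using congr($hFG x)

variable {k A : Type*} [Field k] [Ring A] [HopfAlgebra k A]

lemma Submodule.eq_bot_of_mul_mem_of_comul_mem {N : Submodule k A}
    (hmul : ∀ y ∈ N, ∀ z, y * z ∈ N)
    (hcomul : ∀ y ∈ N, comul y ∈ LinearMap.range (N.subtype.rTensor A)) (hone : (1 : A) ∉ N) :
    N = ⊥ := by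
  have hcounit (y : A) (hy : y ∈ N) : counit (R := k) y = 0 := by
    -- `ε(y) 1 = y₍₁₎ S(y₍₂₎)` lies in the right ideal `N`
    have hmem : counit (R := k) y • (1 : A) ∈ N := by
      obtain ⟨w, hw⟩ := hcomul y hy
      rw [← Algebra.algebraMap_eq_smul_one, ← HopfAlgebra.mul_antipode_lTensor_comul_apply, ← hw]
      clear hw
      induction w using TensorProduct.induction_on with
      | zero => simp
      | tmul n z => simpa using hmul n n.2 _
      | add w w' hw hw' => simpa using add_mem hw hw'
    by_contra h
    exact hone (by simpa [smul_smul, h] using N.smul_mem (counit (R := k) y)⁻¹ hmem)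
  refine eq_bot_iff.2 fun y hy => ?_
  obtain ⟨w, hw⟩ := hcomul y hy
  have hε : counit ∘ₗ N.subtype = 0 := LinearMap.ext fun n => hcounit n n.2
  have : sliceLeft (counit (R := k)) (comul y) = y := by
    simp [sliceLeft, Coalgebra.rTensor_counit_comul]
  simpa [← hw, sliceLeft_rTensor, hε] using this.symm

lemma IsRightIntegral.eq_zero_of_forall_mul {lam : A →ₗ[k] k} (hlam : IsRightIntegral lam)
    (hone : lam 1 = 1) {a : A} (ha : ∀ x, lam (a * x) = 0) : a = 0 := by
  let N : Submodule k A := ⨅ x : A, LinearMap.ker (lam ∘ₗ LinearMap.mulRight k x)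
  have mem_N (y : A) : y ∈ N ↔ ∀ x, lam (y * x) = 0 := by simp [N]
  suffices N = ⊥ from (Submodule.mem_bot k).1 (this ▸ (mem_N a).2 ha)
  refine Submodule.eq_bot_of_mul_mem_of_comul_mem (fun y hy z => ?_) (fun y hy => ?_)
    fun h => by simpa [hone] using (mem_N 1).1 h 1
  · simpa [mem_N, mul_assoc] using fun x => (mem_N y).1 hy (z * x)
  · have hy0 : lam ∘ₗ LinearMap.mulLeft k y = 0 := LinearMap.ext ((mem_N y).1 hy)
    refine (mem_range_rTensor_iff_sliceRight N _).2 fun f => (mem_N _).2 fun x => ?_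
    calc lam (sliceRight f (comul y) * x)
        = f (sliceLeft (lam ∘ₗ LinearMap.mulRight k x) (comul y)) :=
          apply_sliceRight (lam ∘ₗ LinearMap.mulRight k x) f _
      _ = 0 := by simp [hlam.sliceLeft_comul_mulRight, hy0]

end Faithful

section Expectation

open Coalgebra

lemma map_sliceRight_comul {R C D : Type*} [CommSemiring R] [AddCommMonoid C] [Module R C]
    [Coalgebra R C] [AddCommMonoid D] [Module R D] [Coalgebra R D] (f : C →ₗc[R] D)
    (φ : D →ₗ[R] R) (c : C) :
    f (sliceRight (φ ∘ₗ f.toLinearMap) (comul c)) = sliceRight φ (comul (f c)) := by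
  rw [← CoalgHomClass.map_comp_comul_apply]
  change f.toLinearMap _ = _
  rw [map_sliceRight, ← sliceRight_lTensor, ← LinearMap.comp_apply (LinearMap.lTensor _ _),
    LinearMap.lTensor_comp_rTensor]
  rfl

lemma comul_sliceRight_comul {R C : Type*} [CommSemiring R] [AddCommMonoid C] [Module R C]
    [Coalgebra R C] (φ : C →ₗ[R] R) (c : C) :
    comul (sliceRight φ (comul c)) = (sliceRight φ ∘ₗ comul).lTensor C (comul c) := by
  rw [map_sliceRight, ← coassoc_symm_apply, sliceRight_assoc_symm, LinearMap.lTensor_comp_apply]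

variable {R A A' L : Type*} [CommSemiring R] [Semiring A] [Bialgebra R A] [Semiring A']
  [Bialgebra R A'] [Semiring L] [Bialgebra R L]

def expectation (π : A →ₐc[R] L) (lam : L →ₗ[R] R) : A →ₗ[R] A :=
  sliceRight (lam ∘ₗ π.toLinearMap) ∘ₗ comul

lemma IsLeftIntegral.map_expectation {lam : L →ₗ[R] R} (hlam : IsLeftIntegral lam)
    (π : A →ₐc[R] L) (a : A) : π (expectation π lam a) = lam (π a) • 1 :=
  (map_sliceRight_comul π.toCoalgHom lam a).trans (hlam (π a))

lemma expectation_map_of_comp (lam : L →ₗ[R] R) {π : A →ₐc[R] L} {π' : A' →ₐc[R] L}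
    {θ : A →ₐc[R] A'} (h : ∀ a, π' (θ a) = π a) (a : A) :
    θ (expectation π lam a) = expectation π' lam (θ a) := by
  have : lam ∘ₗ π.toLinearMap = (lam ∘ₗ π'.toLinearMap) ∘ₗ θ.toLinearMap :=
    LinearMap.ext fun x => congrArg lam (h x).symm
  rw [expectation, LinearMap.comp_apply, this]
  exact map_sliceRight_comul θ.toCoalgHom _ a

lemma IsRightIntegral.apply_expectation {μ : A →ₗ[R] R} (hμ : IsRightIntegral μ)
    (π : A →ₐc[R] L) {lam : L →ₗ[R] R} (hlam : lam 1 = 1) (a : A) :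
    μ (expectation π lam a) = μ a := by
  rw [expectation, LinearMap.comp_apply, apply_sliceRight, hμ a, map_smul]
  change μ a • lam (π 1) = μ a
  rw [map_one, hlam, smul_eq_mul, mul_one]

end Expectation

lemma IsLeftIntegral.expectation_mem_coinvariants {R A L : Type*} [CommRing R] [Ring A] [Ring L]
    [HopfAlgebra R A] [HopfAlgebra R L] {lam : L →ₗ[R] R} (hlam : IsLeftIntegral lam)
    (π : A →ₐc[R] L) (a : A) : expectation π lam a ∈ coinvariants π := by
  have : π.toLinearMap ∘ₗ expectation π lam = Algebra.linearMap R L ∘ₗ lam ∘ₗ π.toLinearMap :=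
    LinearMap.ext fun x =>
      (hlam.map_expectation π x).trans (Algebra.algebraMap_eq_smul_one _).symm
  change LinearMap.lTensor A π.toLinearMap (Coalgebra.comul (expectation π lam a)) = _
  rw [expectation, LinearMap.comp_apply, comul_sliceRight_comul, ← LinearMap.lTensor_comp_apply,
    ← expectation, this, lTensor_algebraLinearMap_comp]

theorem short_five_lemma_cosemisimple_general {k B A A' L : Type*} [Field k]
    [Ring B] [Ring A] [Ring A'] [Ring L]
    [HopfAlgebra k B] [HopfAlgebra k A] [HopfAlgebra k A'] [HopfAlgebra k L]
    (hcsA : IsCosemisimple k A) (hcsL : IsCosemisimple k L)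
    (i : B →ₐc[k] A) (i' : B →ₐc[k] A')
    (π : A →ₐc[k] L) (π' : A' →ₐc[k] L) (θ : A →ₐc[k] A')
    (hi' : Function.Injective i')
    (hco : Set.range i = coinvariants π)
    (hθi : ∀ b : B, θ (i b) = i' b) (hπθ : ∀ a : A, π' (θ a) = π a) :
    Function.Injective θ := by
  obtain ⟨μ, hμ1, -, hμ⟩ := hcsA.exists_integral
  obtain ⟨lam, hlam1, hlam, -⟩ := hcsL.exists_integral
  refine (injective_iff_map_eq_zero θ).2 fun a ha => hμ.eq_zero_of_forall_mul hμ1 fun x => ?_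
  obtain ⟨b, hb⟩ : expectation π lam (a * x) ∈ Set.range i :=
    hco ▸ hlam.expectation_mem_coinvariants π (a * x)
  have hb0 : i' b = i' 0 := by
    rw [← hθi, hb, expectation_map_of_comp lam hπθ, map_mul, ha, zero_mul, map_zero, map_zero]
  rw [← hμ.apply_expectation π hlam1, ← hb, hi' hb0, map_zero, map_zero]

/-- Short five lemma for cosemisimple Hopf algebras.  Given pre-exact rows
`k → B → A → L → k` and `k → B → A' → L → k` (with `i, i'` injective, `π, π'` surjective and
`i(B) = A^{co π}`, `i'(B) = A'^{co π'}`) and a compatible middle map `θ : A → A'`, the map `θ`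
is injective. -/
theorem short_five_lemma_cosemisimple {k B A A' L : Type*} [Field k]
    [Ring B] [Ring A] [Ring A'] [Ring L]
    [HopfAlgebra k B] [HopfAlgebra k A] [HopfAlgebra k A'] [HopfAlgebra k L]
    (hcsB : IsCosemisimple k B) (hcsA : IsCosemisimple k A)
    (hcsA' : IsCosemisimple k A') (hcsL : IsCosemisimple k L)
    (i : B →ₐc[k] A) (i' : B →ₐc[k] A')
    (π : A →ₐc[k] L) (π' : A' →ₐc[k] L) (θ : A →ₐc[k] A')
    (hi : Function.Injective i) (hi' : Function.Injective i')
    (hπ : Function.Surjective π) (hπ' : Function.Surjective π')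
    (hco : Set.range i = coinvariants π) (hco' : Set.range i' = coinvariants π')
    (hθi : ∀ b : B, θ (i b) = i' b) (hπθ : ∀ a : A, π' (θ a) = π a) :
    Function.Injective θ :=
  short_five_lemma_cosemisimple_general hcsA hcsL i i' π π' θ hi' hco hθi hπθ
end

section
/- Let A be a Hopf *-algebra generated by self-adjoint elements u_{ij} (1 ≤ i,j ≤ n) with Δ(u_{ij}) = Σ_k u_{ik} ⊗ u_{kj}, and suppose there is a surjective Hopf *-algebra map p : A → ℂ[ℤ/2], u_{ij} ↦ δ_{ij} g where g is the generator of ℤ/2. Let PA ⊆ A be the subalgebra generated by all products u_{ij}u_{kl}. Then the coinvariant subalgebra A^{co p} := {a ∈ A : (id ⊗ p)Δ(a) = a ⊗ 1} equals PA; in particular the sequence ℂ → PA → A → ℂ[ℤ/2] → ℂ is pre-exact. -/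
open TensorProduct

/-- The comultiplication of the group algebra `ℂ[ℤ/2]`, determined by `Δ(g^m) = g^m ⊗ g^m`. -/
noncomputable def comulZ2 :
    MonoidAlgebra ℂ (Multiplicative (ZMod 2)) →ₗ[ℂ]
      MonoidAlgebra ℂ (Multiplicative (ZMod 2)) ⊗[ℂ] MonoidAlgebra ℂ (Multiplicative (ZMod 2)) :=
  (Finsupp.lsum ℂ fun g => LinearMap.toSpanSingleton ℂ _
    (MonoidAlgebra.of ℂ (Multiplicative (ZMod 2)) g ⊗ₜ[ℂ]
      MonoidAlgebra.of ℂ (Multiplicative (ZMod 2)) g)) ∘ₗ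
    (MonoidAlgebra.coeffLinearEquiv ℂ).toLinearMap

/-! The coaction `ρ = (id ⊗ p) ∘ Δ` is an algebra map with `ρ (u i j) = u i j ⊗ g`, so a product of
`k` generators is homogeneous of degree `g ^ k`. As `g ^ 2 = 1 ≠ g`, `A` is the sum of the span of
even-length words, which is `PA` and consists of coinvariants, and the span of odd-length words,
on which `ρ` is `· ⊗ g`; a coinvariant in the latter is zero. -/

open Pointwise Submodule

theorem iSup_nat_eq_iSup_even_sup_iSup_odd {α : Type*} [CompleteLattice α] (f : ℕ → α) :
    ⨆ k, f k = (⨆ n, f (2 * n)) ⊔ ⨆ n, f (2 * n + 1) := by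
  refine le_antisymm (iSup_le fun k => ?_) (sup_le (iSup_le fun n => le_iSup f _)
    (iSup_le fun n => le_iSup f _))
  obtain ⟨n, rfl | rfl⟩ := Nat.even_or_odd' k
  · exact le_sup_of_le_left (le_iSup (fun n => f (2 * n)) n)
  · exact le_sup_of_le_right (le_iSup (fun n => f (2 * n + 1)) n)

namespace Algebra

variable {R A : Type*} [CommSemiring R] [Semiring A] [Algebra R A]

theorem toSubmodule_adjoin_eq_iSup_span_pow (s : Set A) :
    Subalgebra.toSubmodule (adjoin R s) = ⨆ n, span R s ^ n := by
  refine le_antisymm ((adjoin_toSubmodule_le R).2 fun x hx => ?_)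
    (iSup_le fun n x hx => Submodule.pow_induction_on_left _ (Subalgebra.algebraMap_mem _)
      (fun _ _ => add_mem) (fun _ hm _ => Subalgebra.mul_mem _ (span_le_adjoin R s hm)) hx)
  induction hx using Submonoid.closure_induction with
  | mem x hx => exact le_iSup (span R s ^ ·) 1 (by simpa using subset_span hx)
  | one => exact le_iSup (span R s ^ ·) 0 (by rw [pow_zero]; exact Submodule.one_le.1 le_rfl)
  | mul x y _ _ hx hy =>
    have hmul : (⨆ n, span R s ^ n) * (⨆ n, span R s ^ n) ≤ ⨆ n, span R s ^ n := by
      simp only [iSup_mul, mul_iSup, ← pow_add]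
      exact iSup_le fun i => iSup_le fun j => le_iSup (span R s ^ ·) (j + i)
    exact hmul (mul_mem_mul hx hy)

theorem toSubmodule_adjoin_mul_self_eq_iSup_span_pow_even (s : Set A) :
    Subalgebra.toSubmodule (adjoin R (s * s)) = ⨆ n, span R s ^ (2 * n) := by
  rw [toSubmodule_adjoin_eq_iSup_span_pow, ← span_mul_span]
  simp only [← pow_two, pow_mul]

end Algebra

section Homogeneous

variable {R A B : Type*} [CommSemiring R] [Semiring A] [Algebra R A] [Semiring B] [Algebra R B]

def homogeneousSubmodule (f : A →ₐ[R] A ⊗[R] B) (b : B) : Submodule R A :=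
  LinearMap.eqLocus f.toLinearMap ((TensorProduct.mk R A B).flip b)

variable (f : A →ₐ[R] A ⊗[R] B)

theorem mem_homogeneousSubmodule {b : B} {x : A} :
    x ∈ homogeneousSubmodule f b ↔ f x = x ⊗ₜ b :=
  Iff.rfl

theorem homogeneousSubmodule_mul_le (b c : B) :
    homogeneousSubmodule f b * homogeneousSubmodule f c ≤ homogeneousSubmodule f (b * c) :=
  mul_le.2 fun x hx y hy => by
    rw [mem_homogeneousSubmodule] at hx hy ⊢
    rw [map_mul, hx, hy, Algebra.TensorProduct.tmul_mul_tmul]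

theorem pow_le_homogeneousSubmodule_pow {M : Submodule R A} {b : B}
    (hM : M ≤ homogeneousSubmodule f b) (k : ℕ) : M ^ k ≤ homogeneousSubmodule f (b ^ k) := by
  induction k with
  | zero =>
    rw [pow_zero, pow_zero, Submodule.one_le, mem_homogeneousSubmodule, map_one]
    rfl
  | succ k ih =>
    rw [pow_succ, pow_succ]
    exact (mul_le_mul' ih hM).trans (homogeneousSubmodule_mul_le f _ _)

end Homogeneous

section Field

variable {K A B : Type*} [Field K] [Ring A] [Algebra K A] [Ring B] [Algebra K B]
  (f : A →ₐ[K] A ⊗[K] B)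

theorem disjoint_homogeneousSubmodule {b c : B} (hbc : b ≠ c) :
    Disjoint (homogeneousSubmodule f b) (homogeneousSubmodule f c) := by
  refine disjoint_def.2 fun x hb hc => ?_
  obtain ⟨φ, hφ⟩ := Module.Projective.exists_dual_ne_zero K (sub_ne_zero.2 hbc)
  have h := congrArg ((TensorProduct.rid K A).toLinearMap ∘ₗ TensorProduct.map LinearMap.id φ)
    (((mem_homogeneousSubmodule f).1 hb).symm.trans ((mem_homogeneousSubmodule f).1 hc))
  simp only [LinearMap.comp_apply, map_tmul, LinearMap.id_apply, LinearEquiv.coe_coe, rid_tmul]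
    at h
  rw [map_sub] at hφ
  exact (smul_eq_zero.1 (by rw [sub_smul, h, sub_self])).resolve_left hφ

theorem homogeneousSubmodule_one_eq_adjoin_mul_self {b : B} (hb_sq : b * b = 1) (hb : b ≠ 1)
    {s : Set A} (hs : Algebra.adjoin K s = ⊤) (hf : ∀ x ∈ s, f x = x ⊗ₜ b) :
    homogeneousSubmodule f 1 = Subalgebra.toSubmodule (Algebra.adjoin K (s * s)) := by
  have hspan : span K s ≤ homogeneousSubmodule f b := span_le.2 hf
  have heven (n : ℕ) : span K s ^ (2 * n) ≤ homogeneousSubmodule f 1 := by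
    simpa [pow_mul, sq, hb_sq] using pow_le_homogeneousSubmodule_pow f hspan (2 * n)
  have hodd : ⨆ n, span K s ^ (2 * n + 1) ≤ homogeneousSubmodule f b := iSup_le fun n => by
    simpa [pow_succ, pow_mul, sq, hb_sq] using pow_le_homogeneousSubmodule_pow f hspan (2 * n + 1)
  rw [Algebra.toSubmodule_adjoin_mul_self_eq_iSup_span_pow_even]
  refine le_antisymm (fun x hx => ?_) (iSup_le heven)
  have htop : x ∈ (⨆ n, span K s ^ (2 * n)) ⊔ ⨆ n, span K s ^ (2 * n + 1) := by
    rw [← iSup_nat_eq_iSup_even_sup_iSup_odd, ← Algebra.toSubmodule_adjoin_eq_iSup_span_pow, hs]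
    exact mem_top
  obtain ⟨y, hy, z, hz, rfl⟩ := mem_sup.1 htop
  have hz_even : z ∈ homogeneousSubmodule f 1 := by
    simpa using sub_mem hx (iSup_le heven hy)
  rw [disjoint_def.1 (disjoint_homogeneousSubmodule f hb.symm) z hz_even (hodd hz), add_zero]
  exact hy

end Field

theorem coinvariants_eq_projective_version_general (n : ℕ) (A : Type*) [Ring A] [HopfAlgebra ℂ A]
    (u : Fin n → Fin n → A)
    (hcomul : ∀ i j, Coalgebra.comul (R := ℂ) (u i j) = ∑ k, u i k ⊗ₜ[ℂ] u k j)
    (hgen : Algebra.adjoin ℂ {x : A | ∃ i j, x = u i j} = ⊤)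
    (p : A →ₐ[ℂ] MonoidAlgebra ℂ (Multiplicative (ZMod 2)))
    (hp : ∀ i j, p (u i j) = if i = j then
      MonoidAlgebra.of ℂ (Multiplicative (ZMod 2)) (Multiplicative.ofAdd 1) else 0) :
    {a : A | (TensorProduct.map LinearMap.id p.toLinearMap) (Coalgebra.comul a) = a ⊗ₜ[ℂ] 1}
      = (Algebra.adjoin ℂ {x : A | ∃ i j k l, x = u i j * u k l} : Set A) := by
  set g := MonoidAlgebra.of ℂ (Multiplicative (ZMod 2)) (Multiplicative.ofAdd 1)
  have hg_sq : g * g = 1 := by rw [← map_mul]; exact map_one _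
  have hg : g ≠ 1 := by
    rw [← map_one (MonoidAlgebra.of ℂ _), Ne, (MonoidAlgebra.of_injective).eq_iff]
    decide
  let ρ := (Algebra.TensorProduct.map (AlgHom.id ℂ A) p).comp (Bialgebra.comulAlgHom ℂ A)
  have hρ : ∀ x ∈ {x : A | ∃ i j, x = u i j}, ρ x = x ⊗ₜ g := by
    rintro _ ⟨i, j, rfl⟩
    change TensorProduct.map LinearMap.id p.toLinearMap (Coalgebra.comul (u i j)) = _
    simp [hcomul, hp, tmul_ite]
  have hpairs : {x : A | ∃ i j k l, x = u i j * u k l}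
      = {x : A | ∃ i j, x = u i j} * {x : A | ∃ i j, x = u i j} := by
    ext x
    simp only [Set.mem_mul, Set.mem_ofPred_eq]
    constructor
    · rintro ⟨i, j, k, l, rfl⟩
      exact ⟨_, ⟨i, j, rfl⟩, _, ⟨k, l, rfl⟩, rfl⟩
    · rintro ⟨_, ⟨i, j, rfl⟩, _, ⟨k, l, rfl⟩, rfl⟩
      exact ⟨i, j, k, l, rfl⟩
  rw [hpairs, ← Subalgebra.coe_toSubmodule,
    ← homogeneousSubmodule_one_eq_adjoin_mul_self ρ hg_sq hg hgen hρ]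
  rfl

/-- Let `A` be a Hopf `*`-algebra generated by self-adjoint elements `u i j` with
`Δ(u_{ij}) = Σ_k u_{ik} ⊗ u_{kj}`, and let `p : A → ℂ[ℤ/2]` be a surjective Hopf algebra map
with `p(u_{ij}) = δ_{ij} g`.  Then the coinvariant subalgebra
`A^{co p} = {a : (id ⊗ p)Δ(a) = a ⊗ 1}` equals the subalgebra `PA` generated by the products
`u_{ij} u_{kl}`; in particular the sequence `ℂ → PA → A → ℂ[ℤ/2] → ℂ` is pre-exact. -/
theorem coinvariants_eq_projective_version (n : ℕ) (A : Type*) [Ring A] [HopfAlgebra ℂ A]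
    [StarRing A]
    (u : Fin n → Fin n → A)
    (hstar : ∀ i j, star (u i j) = u i j)
    (hcomul : ∀ i j, Coalgebra.comul (R := ℂ) (u i j) = ∑ k, u i k ⊗ₜ[ℂ] u k j)
    (hgen : Algebra.adjoin ℂ {x : A | ∃ i j, x = u i j} = ⊤)
    (p : A →ₐ[ℂ] MonoidAlgebra ℂ (Multiplicative (ZMod 2)))
    (hpcomul : ∀ a : A,
      (TensorProduct.map p.toLinearMap p.toLinearMap) (Coalgebra.comul a) = comulZ2 (p a))
    (hsurj : Function.Surjective p)
    (hp : ∀ i j, p (u i j) = if i = j then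
      MonoidAlgebra.of ℂ (Multiplicative (ZMod 2)) (Multiplicative.ofAdd 1) else 0) :
    {a : A | (TensorProduct.map LinearMap.id p.toLinearMap) (Coalgebra.comul a) = a ⊗ₜ[ℂ] 1}
      = (Algebra.adjoin ℂ {x : A | ∃ i j k l, x = u i j * u k l} : Set A) :=
  coinvariants_eq_projective_version_general n A u hcomul hgen p hp
end
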